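/- arXiv:math/0506333 — 6 statements merged into one kernel-verified Lean document; each statement's English description precedes it below -/
import Mathlib

section
/- An assignment φ(X_{ij}) = Σ_{h=1}^{l_i} a^i_{jh} X_{ih} + ψ_{ij}(X_1,…,X_{i-1}), where for all i,j the ψ_{ij} are homogeneous polynomials of weighted degree q_i in R_{[i-1]} and each matrix A_i = (a^i_{jh})_{j,h=1,…,l_i} ∈ M_{l_i}(K) is invertible, defines a graded K-algebra automorphism of R. Conversely, every graded K-algebra automorphism of R is of this form. -/
/-!
A substitution `X t ↦ ∑ s, a t s • X s + ψ t` with every image homogeneous of the weight of `X t`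
is graded. It is surjective by induction on the weight: once the variables of smaller weight lie
in the image, so do the `ψ t` of the next weight, hence the linear forms `∑ s, a t s • X s`, and
inverting the block of `a` of that weight recovers the variables. A surjective endomorphism of a
Noetherian ring is injective.

Conversely, homogeneity of `φ (X t)` of positive degree forces its linear part to be
block-diagonal and its remaining terms to involve only variables of smaller weight. Linear parts
multiply under composition of maps preserving the ideal `(X_1, …, X_N)`, so the linear part of
`φ.symm` inverts that of `φ`.
-/

open MvPolynomial

namespace Finsupp

theorem eq_single_one_of_weight_le {σ : Type*} {w : σ → ℕ} (hw : ∀ s, 0 < w s)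
    {e : σ →₀ ℕ} {v : σ} (hv : e v ≠ 0) (h : weight w e ≤ w v) : e = single v 1 := by
  have : NonTorsionWeight ℕ w := nonTorsionWeight_of ℕ (w := w) fun s => (hw s).ne'
  have hle : single v 1 ≤ e := single_le_iff.mpr (Nat.one_le_iff_ne_zero.mpr hv)
  have hsplit : weight w e = w v + weight w (e - single v 1) := by
    conv_lhs => rw [← add_tsub_cancel_of_le hle]
    rw [map_add, weight_single, one_smul]
  have hrest : e - single v 1 = 0 := (weight_eq_zero_iff_eq_zero w).mp (by omega)
  rw [← add_tsub_cancel_of_le hle, hrest, add_zero]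

end Finsupp

namespace Matrix

variable {ι κ K : Type*} [Fintype ι] [DecidableEq ι] [CommRing K]

theorem commute_diagonal_indicator_iff [DecidableEq κ] (w : ι → κ) (A : Matrix ι ι K) :
    (∀ q, Commute (diagonal fun k => if w k = q then (1 : K) else 0) A) ↔
      ∀ i j, w i ≠ w j → A i j = 0 := by
  simp only [Commute, SemiconjBy, ← Matrix.ext_iff, diagonal_mul, mul_diagonal]
  constructor
  · intro h i j hij
    simpa [hij.symm] using h (w i) i j
  · intro h q i j
    by_cases hij : w i = w j
    · simp [hij]
    · simp [h i j hij]

theorem inv_apply_eq_zero_of_ne (w : ι → κ) {A : Matrix ι ι K}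
    (hA : ∀ i j, w i ≠ w j → A i j = 0) {i j : ι} (hij : w i ≠ w j) : A⁻¹ i j = 0 := by
  classical
  by_cases hdet : IsUnit A.det
  · have hunit := (isUnit_iff_isUnit_det A).mpr hdet
    have hinv : ∀ q, Commute (diagonal fun k => if w k = q then (1 : K) else 0) A⁻¹ := by
      intro q
      rw [← hunit.unit_spec, ← coe_units_inv]
      exact ((commute_diagonal_indicator_iff w A).mpr hA q).units_inv_right
    exact (commute_diagonal_indicator_iff w _).mp hinv i j hij
  · simp [nonsing_inv_apply_not_isUnit A hdet]

end Matrix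

theorem RingHom.injective_of_surjective_of_isNoetherianRing {A : Type*} [CommRing A]
    [IsNoetherianRing A] (f : A →+* A) (hf : Function.Surjective f) : Function.Injective f := by
  have hmono : Monotone fun n => RingHom.ker (f ^ n) := by
    refine monotone_nat_of_le_succ fun n x hx => ?_
    rw [RingHom.mem_ker] at hx ⊢
    rw [pow_succ', RingHom.mul_def, RingHom.comp_apply, hx, map_zero]
  obtain ⟨n, hn⟩ := monotone_stabilizes_iff_noetherian.mpr ‹IsNoetherianRing A› ⟨_, hmono⟩
  refine (injective_iff_map_eq_zero f).mpr fun x hx => ?_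
  obtain ⟨y, rfl⟩ := RingHom.coe_pow f n ▸ hf.iterate n x
  have hy : y ∈ RingHom.ker (f ^ (n + 1)) := by
    rwa [RingHom.mem_ker, pow_succ', RingHom.mul_def, RingHom.comp_apply]
  have hker : RingHom.ker (f ^ n) = RingHom.ker (f ^ (n + 1)) := hn (n + 1) n.le_succ
  rwa [← hker, RingHom.mem_ker] at hy

namespace MvPolynomial

section WeightedHomogeneous

variable {σ τ R M : Type*} [CommSemiring R] [AddCommMonoid M]

theorem IsWeightedHomogeneous.aeval {w : σ → M} {w' : τ → M} {g : σ → MvPolynomial τ R}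
    (hg : ∀ s, (g s).IsWeightedHomogeneous w' (w s)) {f : MvPolynomial σ R} {d : M}
    (hf : f.IsWeightedHomogeneous w d) : (aeval g f).IsWeightedHomogeneous w' d := by
  induction hf using IsWeightedHomogeneous.induction_on with
  | zero => simpa using isWeightedHomogeneous_zero R w' d
  | add p q _ _ hp hq => simpa using hp.add hq
  | monomial e r he =>
    rw [aeval_monomial, ← he, Finsupp.weight_apply, algebraMap_eq]
    exact (IsWeightedHomogeneous.prod _ _ _ fun s _ => (hg s).pow (e s)).C_mul r

theorem isWeightedHomogeneous_sum_C_mul_X [Fintype σ] {w : σ → M} {c : σ → R} {m : M}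
    (hc : ∀ s, w s ≠ m → c s = 0) : (∑ s, C (c s) * X s).IsWeightedHomogeneous w m := by
  refine IsWeightedHomogeneous.sum _ _ _ fun s _ => ?_
  by_cases hs : w s = m
  · simpa [hs] using (isWeightedHomogeneous_X R w s).C_mul (c s)
  · simpa [hc s hs] using isWeightedHomogeneous_zero R w m

theorem IsWeightedHomogeneous.mem_supported {w : σ → ℕ} (hw : ∀ s, 0 < w s)
    {p : MvPolynomial σ R} {m : ℕ} (hp : p.IsWeightedHomogeneous w m)
    (hlin : ∀ v, coeff (Finsupp.single v 1) p = 0) : p ∈ supported R {s | w s < m} := by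
  rw [MvPolynomial.mem_supported]
  intro v hv
  obtain ⟨e, he, hve⟩ := (mem_vars_iff_mem_support v).mp hv
  have hwe : Finsupp.weight w e = m := hp (mem_support_iff.mp he)
  have hev : e v ≠ 0 := Finsupp.mem_support_iff.mp hve
  refine lt_of_le_of_ne (hwe ▸ Finsupp.le_weight_of_ne_zero' w hev) fun hvm => ?_
  have := Finsupp.eq_single_one_of_weight_le hw hev (hwe.trans hvm.symm).le
  exact mem_support_iff.mp he (this ▸ hlin v)

end WeightedHomogeneous

section LinearPart

variable {σ τ υ R : Type*} [CommSemiring R]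

theorem coeff_single_one_mul (u : σ) (p q : MvPolynomial σ R) :
    coeff (Finsupp.single u 1) (p * q) =
      coeff 0 p * coeff (Finsupp.single u 1) q + coeff (Finsupp.single u 1) p * coeff 0 q := by
  classical
  rw [coeff_mul, Finsupp.antidiagonal_single]
  simp [Finset.Nat.antidiagonal_succ]

theorem constantCoeff_algHom_apply (χ : MvPolynomial σ R →ₐ[R] MvPolynomial τ R)
    (hχ : ∀ s, constantCoeff (χ (X s)) = 0) (p : MvPolynomial σ R) :
    constantCoeff (χ p) = constantCoeff p := by
  induction p using MvPolynomial.induction_on with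
  | C r => simp
  | add p q hp hq => simp [hp, hq]
  | mul_X p s hp => simp [hp, hχ]

theorem coeff_single_one_algHom_apply [Fintype σ] (χ : MvPolynomial σ R →ₐ[R] MvPolynomial τ R)
    (hχ : ∀ s, constantCoeff (χ (X s)) = 0) (p : MvPolynomial σ R) (u : τ) :
    coeff (Finsupp.single u 1) (χ p) =
      ∑ s, coeff (Finsupp.single s 1) p * coeff (Finsupp.single u 1) (χ (X s)) := by
  classical
  induction p using MvPolynomial.induction_on with
  | C r => simp [coeff_C, eq_comm (a := (0 : _ →₀ ℕ))]
  | add p q hp hq => simp [hp, hq, add_mul, Finset.sum_add_distrib]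
  | mul_X p v hp =>
    simp only [map_mul, coeff_single_one_mul, hp, ← constantCoeff_eq,
      constantCoeff_algHom_apply χ hχ, constantCoeff_X, coeff_X,
      Finsupp.single_left_inj one_ne_zero]
    simp

noncomputable def linearPart (χ : MvPolynomial σ R →ₐ[R] MvPolynomial τ R) : Matrix σ τ R :=
  Matrix.of fun s u => coeff (Finsupp.single u 1) (χ (X s))

theorem linearPart_comp [Fintype τ] (φ : MvPolynomial σ R →ₐ[R] MvPolynomial τ R)
    (χ : MvPolynomial τ R →ₐ[R] MvPolynomial υ R) (hχ : ∀ s, constantCoeff (χ (X s)) = 0) :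
    linearPart (χ.comp φ) = linearPart φ * linearPart χ := by
  ext s u
  exact coeff_single_one_algHom_apply χ hχ (φ (X s)) u

theorem linearPart_id [DecidableEq σ] : linearPart (AlgHom.id R (MvPolynomial σ R)) = 1 := by
  ext s u
  simp [linearPart, coeff_X, Matrix.one_apply, Finsupp.single_left_inj one_ne_zero]

end LinearPart

section GradedAutomorphism

variable {σ K : Type*} [Fintype σ] [DecidableEq σ]

theorem aeval_linear_add_surjective [CommRing K] (w : σ → ℕ) {a : Matrix σ σ K} (ha : IsUnit a)
    (hblk : ∀ t s, w t ≠ w s → a t s = 0) {ψ : σ → MvPolynomial σ K}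
    (hψ : ∀ t, ψ t ∈ supported K {s | w s < w t}) :
    Function.Surjective (aeval (R := K) fun t => (∑ s, C (a t s) * X s) + ψ t) := by
  set F : MvPolynomial σ K →ₐ[K] MvPolynomial σ K := aeval fun t => (∑ s, C (a t s) * X s) + ψ t
  have hinv (t : σ) : ∑ u, C (a⁻¹ t u) * ∑ s, C (a u s) * X s = (X t : MvPolynomial σ K) := by
    have hmul : (a⁻¹.map C * a.map C : Matrix σ σ (MvPolynomial σ K)) = 1 := by
      rw [← Matrix.map_mul, Matrix.nonsing_inv_mul a ((Matrix.isUnit_iff_isUnit_det a).mp ha),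
        Matrix.map_one _ (map_zero C) (map_one C)]
    have h := congrFun (Matrix.mulVec_mulVec X (a⁻¹.map C) (a.map C)) t
    rwa [hmul, Matrix.one_mulVec] at h
  suffices hX : ∀ q t, w t = q → X t ∈ F.range by
    rw [← AlgHom.range_eq_top, eq_top_iff, ← adjoin_range_X, Algebra.adjoin_le_iff]
    rintro _ ⟨t, rfl⟩
    exact hX _ t rfl
  intro q
  induction q using Nat.strong_induction_on with
  | _ q ih =>
  intro t ht
  have hψ_mem (u : σ) (hu : w u = q) : ψ u ∈ F.range := by
    refine Algebra.adjoin_le ?_ ((supported_eq_adjoin_X _).le (hψ u))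
    rintro _ ⟨s, hs, rfl⟩
    exact ih _ (hu ▸ hs) s rfl
  rw [← hinv t]
  refine Subalgebra.sum_mem _ fun u _ => ?_
  by_cases hu : w u = q
  · have hlin : ∑ s, C (a u s) * X s = F (X u) - ψ u := by simp [F]
    rw [hlin, C_mul']
    exact Subalgebra.smul_mem _ (sub_mem (F.mem_range_self (X u)) (hψ_mem u hu)) _
  · rw [Matrix.inv_apply_eq_zero_of_ne w hblk (ht ▸ Ne.symm hu), C_0, zero_mul]
    exact zero_mem _

theorem exists_algEquiv_aeval_linear_add [CommRing K] [IsNoetherianRing K] (w : σ → ℕ)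
    {a : Matrix σ σ K} {ψ : σ → MvPolynomial σ K} (ha : IsUnit a)
    (hblk : ∀ t s, w t ≠ w s → a t s = 0)
    (hψ : ∀ t, (ψ t).IsWeightedHomogeneous w (w t) ∧ ψ t ∈ supported K {s | w s < w t}) :
    ∃ φ : MvPolynomial σ K ≃ₐ[K] MvPolynomial σ K,
      (∀ (d : ℕ) (f : MvPolynomial σ K),
        f.IsWeightedHomogeneous w d → (φ f).IsWeightedHomogeneous w d) ∧
      ∀ t, φ (X t) = (∑ s, C (a t s) * X s) + ψ t := by
  set F : MvPolynomial σ K →ₐ[K] MvPolynomial σ K := aeval fun t => (∑ s, C (a t s) * X s) + ψ t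
  have hsurj : Function.Surjective F := aeval_linear_add_surjective w ha hblk fun t => (hψ t).2
  have hinj : Function.Injective F :=
    F.toRingHom.injective_of_surjective_of_isNoetherianRing hsurj
  refine ⟨AlgEquiv.ofBijective F ⟨hinj, hsurj⟩, fun d f hf => hf.aeval fun t => ?_,
    fun t => aeval_X _ t⟩
  exact (isWeightedHomogeneous_sum_C_mul_X fun s hs => hblk t s (Ne.symm hs)).add (hψ t).1

theorem exists_linear_add_of_algEquiv [CommRing K] {w : σ → ℕ} (hw : ∀ s, 0 < w s)
    (φ : MvPolynomial σ K ≃ₐ[K] MvPolynomial σ K)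
    (hφ : ∀ (d : ℕ) (f : MvPolynomial σ K),
      f.IsWeightedHomogeneous w d → (φ f).IsWeightedHomogeneous w d) :
    ∃ (a : Matrix σ σ K) (ψ : σ → MvPolynomial σ K),
      IsUnit a ∧ (∀ t s, w t ≠ w s → a t s = 0) ∧
      (∀ t, (ψ t).IsWeightedHomogeneous w (w t) ∧ ψ t ∈ supported K {s | w s < w t}) ∧
      ∀ t, φ (X t) = (∑ s, C (a t s) * X s) + ψ t := by
  have hXhom (t : σ) : (φ (X t)).IsWeightedHomogeneous w (w t) :=
    hφ _ _ (isWeightedHomogeneous_X K w t)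
  have hconst (t : σ) : constantCoeff (φ (X t)) = 0 := by
    rw [constantCoeff_eq]
    exact (hXhom t).coeff_eq_zero 0 (by simpa using (hw t).ne)
  have hconst_symm (t : σ) : constantCoeff (φ.symm (X t)) = 0 := by
    rw [← constantCoeff_algHom_apply φ.toAlgHom hconst]
    simp
  set a := linearPart φ.toAlgHom
  have hblk (t s : σ) (hts : w t ≠ w s) : a t s = 0 :=
    (hXhom t).coeff_eq_zero _ (by simpa [Finsupp.weight_single] using hts.symm)
  have hψhom (t : σ) : (φ (X t) - ∑ s, C (a t s) * X s).IsWeightedHomogeneous w (w t) :=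
    (hXhom t).sub (isWeightedHomogeneous_sum_C_mul_X fun s hs => hblk t s (Ne.symm hs))
  have ha : a * linearPart φ.symm.toAlgHom = 1 := by
    rw [← linearPart_comp _ _ hconst_symm, AlgEquiv.symm_comp, linearPart_id]
  refine ⟨a, fun t => φ (X t) - ∑ s, C (a t s) * X s,
    (Matrix.isUnit_iff_isUnit_det a).mpr (Matrix.isUnit_det_of_right_inverse ha), hblk,
    fun t => ⟨hψhom t, (hψhom t).mem_supported hw fun v => ?_⟩, fun t => by ring⟩
  simp [coeff_sum, coeff_X, Finsupp.single_left_inj one_ne_zero, a, linearPart]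

end GradedAutomorphism

end MvPolynomial

theorem graded_automorphisms_of_weighted_polynomial_ring_general
    (K : Type*) [Field K]
    (N : ℕ) (w : Fin N → ℕ) (hpos : ∀ k, 0 < w k) :
    -- any such assignment defines a graded automorphism
    (∀ (a : Matrix (Fin N) (Fin N) K) (ψ : Fin N → MvPolynomial (Fin N) K),
      IsUnit a →
      (∀ t s, w t ≠ w s → a t s = 0) →
      (∀ t, (ψ t).IsWeightedHomogeneous w (w t) ∧
        ψ t ∈ MvPolynomial.supported K {s : Fin N | w s < w t}) →
      ∃ φ : MvPolynomial (Fin N) K ≃ₐ[K] MvPolynomial (Fin N) K,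
        (∀ (d : ℕ) (f : MvPolynomial (Fin N) K),
            f.IsWeightedHomogeneous w d → (φ f).IsWeightedHomogeneous w d) ∧
        (∀ t, φ (X t) = (∑ s, C (a t s) * X s) + ψ t))
    ∧
    -- conversely, any graded automorphism is of this kind
    (∀ φ : MvPolynomial (Fin N) K ≃ₐ[K] MvPolynomial (Fin N) K,
      (∀ (d : ℕ) (f : MvPolynomial (Fin N) K),
          f.IsWeightedHomogeneous w d → (φ f).IsWeightedHomogeneous w d) →
      ∃ (a : Matrix (Fin N) (Fin N) K) (ψ : Fin N → MvPolynomial (Fin N) K),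
        IsUnit a ∧
        (∀ t s, w t ≠ w s → a t s = 0) ∧
        (∀ t, (ψ t).IsWeightedHomogeneous w (w t) ∧
          ψ t ∈ MvPolynomial.supported K {s : Fin N | w s < w t}) ∧
        (∀ t, φ (X t) = (∑ s, C (a t s) * X s) + ψ t)) :=
  ⟨fun _ _ ha hblk hψ => exists_algEquiv_aeval_linear_add w ha hblk hψ,
    fun φ hφ => exists_linear_add_of_algEquiv hpos φ hφ⟩

/-- **Graded automorphisms of a weighted polynomial ring.**
Let `K` be an infinite field of characteristic `0` and `R = K[X_1,…,X_N]` the polynomial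
ring with positive weights `w 1 ≤ w 2 ≤ … ≤ w N` (variables listed by increasing weight;
variables of equal weight form the groups `𝐗_i` of the paper).  An assignment
`φ(X_t) = ∑_s a t s • X_s + ψ t`, where `a` is an invertible matrix whose entries vanish
between different weights (i.e. a block-diagonal matrix, one invertible block `A_i` for each
weight `q_i`), and where `ψ t` is a weighted homogeneous polynomial of degree `w t` in the
variables of strictly smaller weight, defines a graded `K`-algebra automorphism of `R`;
conversely every graded `K`-algebra automorphism of `R` is of this form. -/
theorem graded_automorphisms_of_weighted_polynomial_ring
    (K : Type*) [Field K] [CharZero K]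
    (N : ℕ) (w : Fin N → ℕ) (hpos : ∀ k, 0 < w k) (hmono : Monotone w) :
    -- any such assignment defines a graded automorphism
    (∀ (a : Matrix (Fin N) (Fin N) K) (ψ : Fin N → MvPolynomial (Fin N) K),
      IsUnit a →
      (∀ t s, w t ≠ w s → a t s = 0) →
      (∀ t, (ψ t).IsWeightedHomogeneous w (w t) ∧
        ψ t ∈ MvPolynomial.supported K {s : Fin N | w s < w t}) →
      ∃ φ : MvPolynomial (Fin N) K ≃ₐ[K] MvPolynomial (Fin N) K,
        (∀ (d : ℕ) (f : MvPolynomial (Fin N) K),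
            f.IsWeightedHomogeneous w d → (φ f).IsWeightedHomogeneous w d) ∧
        (∀ t, φ (X t) = (∑ s, C (a t s) * X s) + ψ t))
    ∧
    -- conversely, any graded automorphism is of this kind
    (∀ φ : MvPolynomial (Fin N) K ≃ₐ[K] MvPolynomial (Fin N) K,
      (∀ (d : ℕ) (f : MvPolynomial (Fin N) K),
          f.IsWeightedHomogeneous w d → (φ f).IsWeightedHomogeneous w d) →
      ∃ (a : Matrix (Fin N) (Fin N) K) (ψ : Fin N → MvPolynomial (Fin N) K),
        IsUnit a ∧
        (∀ t s, w t ≠ w s → a t s = 0) ∧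
        (∀ t, (ψ t).IsWeightedHomogeneous w (w t) ∧
          ψ t ∈ MvPolynomial.supported K {s : Fin N | w s < w t}) ∧
        (∀ t, φ (X t) = (∑ s, C (a t s) * X s) + ψ t)) :=
  graded_automorphisms_of_weighted_polynomial_ring_general K N w hpos
end

section
/- Let I be a homogeneous ideal of the weighted polynomial ring R. Then I is T-fixed (φ(I) = I for all φ ∈ T) if and only if I is a strongly stable monomial ideal. -/
/-!
The group `T` contains the diagonal torus and the transvections `X t ↦ X t + c • m`, where `m`
is a variable `X s` with `s < t` of the same weight, or a monomial of weight `w t` in variables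
of smaller weight. A `T`-fixed ideal is torus-fixed, hence monomial, because over an infinite
field a polynomial vanishing on the torus is zero. For a monomial `u = X ^ μ ∈ I` the image of
`u` under `X t ↦ X t + c • m` is a polynomial in `c` with coefficients in the ideal; its linear
coefficient is `μ t • m * u / X t`, and dividing by `μ t` (characteristic zero) gives exactly
the moves of strong stability.

Conversely, if `I` is strongly stable, then every `φ (X t)` is a combination of monomials that
may replace `X t` in any monomial of `I`, so `φ (I) ⊆ I` by substituting one variable at a
time. An automorphism of a Noetherian ring cannot map an ideal strictly into itself.
-/

open MvPolynomial

/-- A monomial ideal of the weighted polynomial ring (weights `w`, variables listed by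
increasing weight) is *strongly stable* if for every monomial `u ∈ I` and every variable
`X t` dividing `u`, both `X s · u / X t ∈ I` for every earlier variable `X s` of the same
weight (`s < t`, `w s = w t`), and `v · u / X t ∈ I` for every monomial `v` of weighted
degree `w t` in the variables of strictly smaller weight. -/
def StronglyStable {K : Type*} [Field K] {N : ℕ} (w : Fin N → ℕ)
    (I : Ideal (MvPolynomial (Fin N) K)) : Prop :=
  (∃ A : Set (Fin N →₀ ℕ),
      I = Ideal.span ((fun μ => (monomial μ (1 : K) : MvPolynomial (Fin N) K)) '' A)) ∧
  ∀ μ : Fin N →₀ ℕ, (monomial μ (1 : K) : MvPolynomial (Fin N) K) ∈ I →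
    ∀ t ∈ μ.support,
      (∀ s : Fin N, s < t → w s = w t →
        (monomial (μ - Finsupp.single t 1 + Finsupp.single s 1) (1 : K) :
          MvPolynomial (Fin N) K) ∈ I) ∧
      (∀ ν : Fin N →₀ ℕ, Finsupp.weight w ν = w t → (∀ s ∈ ν.support, w s < w t) →
        (monomial (μ - Finsupp.single t 1 + ν) (1 : K) : MvPolynomial (Fin N) K) ∈ I)

theorem OrderIso.apply_eq_of_apply_le {α : Type*} [PartialOrder α] [WellFoundedGT α]
    (f : α ≃o α) {x : α} (h : f x ≤ x) : f x = x := by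
  by_contra hne
  have hlt : x < f.symm x := by simpa using f.symm.strictMono (lt_of_le_of_ne h hne)
  refine not_strictMono_of_wellFoundedGT (fun n => f.symm^[n] x) (strictMono_nat_of_lt_succ ?_)
  intro n
  rw [Function.iterate_succ_apply]
  exact f.symm.strictMono.iterate n hlt

theorem Ideal.map_eq_self_of_map_le {R : Type*} [CommRing R] [IsNoetherianRing R] (e : R ≃+* R)
    {I : Ideal R} (h : I.map e ≤ I) : I.map e = I :=
  e.idealComapOrderIso.symm.apply_eq_of_apply_le h

theorem Submodule.mem_of_forall_sum_pow_smul_mem {K V : Type*} [Field K] [Infinite K]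
    [AddCommGroup V] [Module K V] (p : Submodule K V) {n : ℕ} (v : ℕ → V)
    (h : ∀ c : K, c ≠ 0 → ∑ k ∈ Finset.range n, c ^ k • v k ∈ p) {k : ℕ} (hk : k < n) :
    v k ∈ p := by
  rw [← Submodule.Quotient.mk_eq_zero, ← Module.forall_dual_apply_eq_zero_iff K]
  intro ℓ
  set L := ℓ ∘ₗ p.mkQ
  set q : Polynomial K := ∑ i ∈ Finset.range n, Polynomial.monomial i (L (v i))
  have hq : q = 0 := by
    refine q.eq_zero_of_infinite_isRoot ((Set.finite_singleton 0).infinite_compl.mono ?_)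
    intro c hc
    calc q.eval c = L (∑ k ∈ Finset.range n, c ^ k • v k) := by
          simp [q, Polynomial.eval_finsetSum, mul_comm]
      _ = 0 := by
          rw [LinearMap.comp_apply, Submodule.mkQ_apply,
            (Submodule.Quotient.mk_eq_zero p).mpr (h c hc), map_zero]
  have hqk := congrArg (Polynomial.coeff · k) hq
  simpa [q, L, Polynomial.finsetSum_coeff, Polynomial.coeff_monomial, hk] using hqk

namespace MvPolynomial

variable {σ R : Type*}

section CommSemiring

variable [CommSemiring R]

theorem exists_eq_span_monomial_iff {I : Ideal (MvPolynomial σ R)} :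
    (∃ A : Set (σ →₀ ℕ), I = Ideal.span ((fun μ => monomial μ (1 : R)) '' A)) ↔
      ∀ f ∈ I, ∀ μ ∈ f.support, monomial μ (1 : R) ∈ I := by
  constructor
  · rintro ⟨A, rfl⟩ f hf μ hμ
    obtain ⟨ν, hνA, hνμ⟩ := mem_ideal_span_monomial_image.mp hf μ hμ
    have hsplit : monomial μ (1 : R) = monomial (μ - ν) 1 * monomial ν 1 := by
      rw [monomial_mul, one_mul, tsub_add_cancel_of_le hνμ]
    rw [hsplit]
    exact Ideal.mul_mem_left _ _ (Ideal.subset_span ⟨ν, hνA, rfl⟩)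
  · intro h
    refine ⟨{μ | monomial μ (1 : R) ∈ I}, le_antisymm (fun f hf => ?_) ?_⟩
    · rw [f.as_sum]
      refine Ideal.sum_mem _ fun μ hμ => ?_
      rw [← mul_one (coeff μ f), ← C_mul_monomial]
      exact Ideal.mul_mem_left _ _ (Ideal.subset_span ⟨μ, h f hf μ hμ, rfl⟩)
    · rw [Ideal.span_le]
      rintro _ ⟨μ, hμ, rfl⟩
      exact hμ

theorem monomial_mul_mem_of_forall_monomial_add_mem {I : Ideal (MvPolynomial σ R)}
    (hI : ∀ f ∈ I, ∀ μ ∈ f.support, monomial μ (1 : R) ∈ I) {α β : σ →₀ ℕ}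
    (h : ∀ ρ, monomial (α + ρ) (1 : R) ∈ I → monomial (β + ρ) (1 : R) ∈ I)
    {f : MvPolynomial σ R} (hf : monomial α 1 * f ∈ I) : monomial β 1 * f ∈ I := by
  rw [f.as_sum, Finset.mul_sum]
  refine Ideal.sum_mem _ fun ρ hρ => ?_
  have hαρ : α + ρ ∈ (monomial α 1 * f).support := by
    rwa [mem_support_iff, coeff_monomial_mul, one_mul, ← mem_support_iff]
  rw [monomial_mul, one_mul, ← mul_one (coeff ρ f), ← C_mul_monomial]
  exact Ideal.mul_mem_left _ _ (h ρ (hI _ hf _ hαρ))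

theorem monomial_mem_supported {s : Set σ} {ν : σ →₀ ℕ} (h : ↑ν.support ⊆ s) (a : R) :
    monomial ν a ∈ supported R s := by
  by_cases ha : a = 0
  · simp [ha]
  · rw [mem_supported, vars_monomial ha]
    exact h

end CommSemiring

section CommRing

variable [CommRing R]

theorem aeval_update_eq_self [DecidableEq σ] {t : σ} (q : MvPolynomial σ R)
    {p : MvPolynomial σ R} (hp : p ∈ supported R {s | s ≠ t}) :
    aeval (Function.update X t q) p = p := by
  conv_rhs => rw [← aeval_X_left_apply p]
  rw [aeval_def, aeval_def]
  refine eval₂_congr _ _ _ fun {i c} hi hc => Function.update_of_ne ?_ _ _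
  exact mem_supported.mp hp ((mem_vars_iff_mem_support _).mpr ⟨_, mem_support_iff.mpr hc, hi⟩)

noncomputable def transvection [DecidableEq σ] (t : σ) (p : supported R {s | s ≠ t}) :
    MvPolynomial σ R ≃ₐ[R] MvPolynomial σ R :=
  AlgEquiv.ofAlgHom (aeval (Function.update X t (X t + (p : MvPolynomial σ R))))
    (aeval (Function.update X t (X t - (p : MvPolynomial σ R))))
    (algHom_ext fun i => by
      rcases eq_or_ne i t with rfl | hi
      · simp only [AlgHom.comp_apply, aeval_X, Function.update_self, map_sub,
          aeval_update_eq_self _ p.2, add_sub_cancel_right, AlgHom.id_apply]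
      · simp only [AlgHom.comp_apply, aeval_X, Function.update_of_ne hi, AlgHom.id_apply])
    (algHom_ext fun i => by
      rcases eq_or_ne i t with rfl | hi
      · simp only [AlgHom.comp_apply, aeval_X, Function.update_self, map_add,
          aeval_update_eq_self _ p.2, sub_add_cancel, AlgHom.id_apply]
      · simp only [AlgHom.comp_apply, aeval_X, Function.update_of_ne hi, AlgHom.id_apply])

theorem transvection_apply [DecidableEq σ] (t : σ) (p : supported R {s | s ≠ t})
    (f : MvPolynomial σ R) :
    transvection t p f = aeval (Function.update X t (X t + (p : MvPolynomial σ R))) f := rfl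

noncomputable def scaleVars (d : σ → Rˣ) : MvPolynomial σ R ≃ₐ[R] MvPolynomial σ R :=
  AlgEquiv.ofAlgHom (aeval fun i => C (d i : R) * X i) (aeval fun i => C (↑(d i)⁻¹ : R) * X i)
    (algHom_ext fun i => by
      rw [AlgHom.comp_apply, aeval_X, map_mul, aeval_C, aeval_X, algebraMap_eq, ← mul_assoc,
        ← map_mul, Units.inv_mul, map_one, one_mul, AlgHom.id_apply])
    (algHom_ext fun i => by
      rw [AlgHom.comp_apply, aeval_X, map_mul, aeval_C, aeval_X, algebraMap_eq, ← mul_assoc,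
        ← map_mul, Units.mul_inv, map_one, one_mul, AlgHom.id_apply])

theorem scaleVars_monomial (d : σ → Rˣ) (μ : σ →₀ ℕ) (a : R) :
    scaleVars d (monomial μ a) = monomial μ (a * μ.prod fun i e => (d i : R) ^ e) := by
  simp [scaleVars, mul_pow, Finsupp.prod_mul, monomial_eq, map_finsuppProd]
  ring

theorem transvection_smul_monomial [DecidableEq σ] (t : σ) (p : supported R {s | s ≠ t}) (c : R)
    (μ : σ →₀ ℕ) :
    transvection t (c • p) (monomial μ 1) = ∑ k ∈ Finset.range (μ t + 1),
      c ^ k • ((p : MvPolynomial σ R) ^ k * X t ^ (μ t - k) * ((μ t).choose k : MvPolynomial σ R) *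
        monomial (μ.erase t) 1) := by
  have hr : monomial (μ.erase t) (1 : R) ∈ supported R {s | s ≠ t} :=
    monomial_mem_supported (fun s hs => by
      simp only [Finset.mem_coe, Finsupp.support_erase, Finset.mem_erase] at hs
      exact hs.1) 1
  conv_lhs => rw [← Finsupp.single_add_erase t μ, ← mul_one (1 : R), ← monomial_mul,
    ← X_pow_eq_monomial]
  rw [map_mul, map_pow, transvection_apply, transvection_apply, aeval_X, Function.update_self,
    aeval_update_eq_self _ hr, add_comm, add_pow, Finset.sum_mul]
  refine Finset.sum_congr rfl fun k _ => ?_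
  simp [smul_pow]

theorem eq_zero_of_forall_eval_eq_zero [IsDomain R] [Infinite R] [Fintype σ]
    {F : MvPolynomial σ R} (h : ∀ x : σ → R, (∀ i, x i ≠ 0) → eval x F = 0) : F = 0 := by
  have hF : (∏ i, X i) * F = 0 := by
    refine MvPolynomial.funext fun x => ?_
    rw [map_zero, map_mul, map_prod]
    simp only [eval_X]
    by_cases hx : ∃ i, x i = 0
    · obtain ⟨i, hi⟩ := hx
      rw [Finset.prod_eq_zero (Finset.mem_univ i) hi, zero_mul]
    · push Not at hx
      rw [h x hx, mul_zero]
  exact (mul_eq_zero.mp hF).resolve_left (Finset.prod_ne_zero_iff.mpr fun i _ => X_ne_zero i)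

end CommRing

theorem monomial_mem_of_forall_scaleVars_mem {K : Type*} [Field K] [Infinite K] [Fintype σ]
    {I : Ideal (MvPolynomial σ K)} (hI : ∀ d : σ → Kˣ, ∀ f ∈ I, scaleVars d f ∈ I)
    {f : MvPolynomial σ K} (hf : f ∈ I) {μ : σ →₀ ℕ} (hμ : μ ∈ f.support) :
    monomial μ (1 : K) ∈ I := by
  classical
  suffices h : monomial μ (coeff μ f) ∈ I by
    have hμ' : coeff μ f ≠ 0 := mem_support_iff.mp hμ
    simpa [C_mul_monomial, hμ'] using I.mul_mem_left (C (coeff μ f)⁻¹) h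
  let J := Submodule.restrictScalars K I
  change monomial μ (coeff μ f) ∈ J
  rw [← Submodule.Quotient.mk_eq_zero, ← Module.forall_dual_apply_eq_zero_iff K]
  intro ℓ
  set L := ℓ ∘ₗ J.mkQ
  -- On the torus, `F` evaluates to `L` of a rescaling of `f`, which lies in `I`.
  set F : MvPolynomial σ K := ∑ ν ∈ f.support, monomial ν (L (monomial ν (coeff ν f)))
  have hF : F = 0 := by
    refine eq_zero_of_forall_eval_eq_zero fun x hx => ?_
    have hscale : scaleVars (fun i => Units.mk0 (x i) (hx i)) f ∈ J := hI _ f hf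
    calc eval x F = L (scaleVars (fun i => Units.mk0 (x i) (hx i)) f) := by
          conv_rhs => rw [f.as_sum]
          simp only [F, map_sum, eval_monomial, scaleVars_monomial]
          refine Finset.sum_congr rfl fun ν _ => ?_
          rw [mul_comm, ← smul_eq_mul, ← map_smul, smul_monomial, smul_eq_mul, mul_comm]
          simp only [Units.val_mk0]
      _ = 0 := by
          rw [LinearMap.comp_apply, Submodule.mkQ_apply,
            (Submodule.Quotient.mk_eq_zero J).mpr hscale, map_zero]
  have hFμ := congrArg (coeff μ) hF
  simp only [F, coeff_sum, coeff_monomial, coeff_zero] at hFμ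
  rwa [Finset.sum_ite_eq' f.support μ, if_pos hμ] at hFμ

theorem monomial_sub_single_mul_mem_of_forall_transvection_mem {K : Type*} [Field K] [CharZero K]
    [DecidableEq σ] {I : Ideal (MvPolynomial σ K)} {t : σ} (p : supported K {s | s ≠ t})
    (hI : ∀ c : K, c ≠ 0 → ∀ f ∈ I, transvection t (c • p) f ∈ I)
    {μ : σ →₀ ℕ} (hμ : monomial μ (1 : K) ∈ I) (ht : μ t ≠ 0) :
    monomial (μ - Finsupp.single t 1) 1 * (p : MvPolynomial σ K) ∈ I := by
  -- the coefficient of `c` in the image of `X ^ μ`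
  have hv := Submodule.mem_of_forall_sum_pow_smul_mem (I.restrictScalars K) _
    (fun c hc => transvection_smul_monomial t p c μ ▸ hI c hc _ hμ) (k := 1) (by omega)
  rw [Nat.choose_one_right, pow_one] at hv
  have hexp : μ - Finsupp.single t 1 = Finsupp.single t (μ t - 1) + μ.erase t := by
    ext i
    rcases eq_or_ne i t with rfl | hi
    · simp
    · simp [hi.symm, Finsupp.erase_ne hi]
  have hsub : monomial (μ - Finsupp.single t 1) (1 : K) =
      X t ^ (μ t - 1) * monomial (μ.erase t) 1 := by
    rw [X_pow_eq_monomial, monomial_mul, one_mul, hexp]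
  have hn : (C (μ t : K)⁻¹ : MvPolynomial σ K) * (μ t : MvPolynomial σ K) = 1 := by
    rw [← map_natCast C, ← map_mul, inv_mul_cancel₀ (Nat.cast_ne_zero.mpr ht), map_one]
  rw [hsub]
  convert I.mul_mem_left (C (μ t : K)⁻¹) hv using 1
  linear_combination (-(X t ^ (μ t - 1) * monomial (μ.erase t) 1 * (p : MvPolynomial σ K))) * hn

end MvPolynomial

section TriangularGraded

variable {σ K : Type*} [Field K] [Fintype σ] [LinearOrder σ]

/-- Membership in the group `T` of upper triangular graded automorphisms. -/
def IsTriangularGraded (w : σ → ℕ) (φ : MvPolynomial σ K ≃ₐ[K] MvPolynomial σ K) : Prop :=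
  ∃ (a : Matrix σ σ K) (ψ : σ → MvPolynomial σ K),
    IsUnit a ∧
    (∀ t s, w t ≠ w s → a t s = 0) ∧
    (∀ t s, t < s → a t s = 0) ∧
    (∀ t, (ψ t).IsWeightedHomogeneous w (w t) ∧
      ψ t ∈ MvPolynomial.supported K {s : σ | w s < w t}) ∧
    (∀ t, φ (X t) = (∑ s, C (a t s) * X s) + ψ t)

variable {w : σ → ℕ}

theorem isTriangularGraded_scaleVars (d : σ → Kˣ) :
    IsTriangularGraded w (scaleVars d) := by
  refine ⟨Matrix.diagonal fun i => (d i : K), 0, ?_, fun t s h => ?_, fun t s h => ?_,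
    fun t => ⟨isWeightedHomogeneous_zero K w _, zero_mem _⟩, fun t => ?_⟩
  · exact Matrix.isUnit_diagonal.mpr (Pi.isUnit_iff.mpr fun i => (d i).isUnit)
  · exact Matrix.diagonal_apply_ne _ fun hts => h (hts ▸ rfl)
  · exact Matrix.diagonal_apply_ne _ h.ne
  · simp [scaleVars, Matrix.diagonal_apply, apply_ite C, ite_mul]

theorem isTriangularGraded_transvection {t : σ} (p : supported K {s | s ≠ t})
    (b : σ → K) (ψ : MvPolynomial σ K) (hb : ∀ s, b s ≠ 0 → s < t ∧ w s = w t)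
    (hψ : ψ.IsWeightedHomogeneous w (w t)) (hψs : ψ ∈ supported K {s | w s < w t})
    (hp : (p : MvPolynomial σ K) = ∑ s, C (b s) * X s + ψ) :
    IsTriangularGraded w (transvection t p) := by
  classical
  set B : Matrix σ σ K := Matrix.of fun i s => if i = t then b s else 0
  have hB : ∀ i s, B i s ≠ 0 → i = t ∧ s < t ∧ w s = w t := by
    intro i s h
    by_cases hi : i = t
    · simp [B, hi] at h; exact ⟨hi, hb s h⟩
    · simp [B, hi] at h
  have hlow : ∀ i s, i < s → (1 + B) i s = 0 := by
    intro i s h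
    rw [Matrix.add_apply, Matrix.one_apply_ne h.ne, zero_add]
    by_contra hne
    obtain ⟨rfl, hs, -⟩ := hB i s hne
    exact lt_asymm h hs
  have hdiag : ∀ i, B i i = 0 := fun i => by
    by_contra h
    obtain ⟨rfl, hlt, -⟩ := hB i i h
    exact lt_irrefl _ hlt
  refine ⟨1 + B, Pi.single t ψ, ?_, fun i s h => ?_, hlow, fun i => ?_, fun i => ?_⟩
  · rw [Matrix.isUnit_iff_isUnit_det,
      Matrix.det_of_isLowerTriangular _ fun i s h => hlow i s (OrderDual.toDual_lt_toDual.mp h)]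
    simp [hdiag]
  · rw [Matrix.add_apply, Matrix.one_apply_ne fun his => h (congrArg w his), zero_add]
    by_contra hne
    obtain ⟨rfl, -, hw⟩ := hB i s hne
    exact h hw.symm
  · rcases eq_or_ne i t with rfl | hi
    · simpa using ⟨hψ, hψs⟩
    · simpa [hi] using isWeightedHomogeneous_zero K w (w i)
  · have hone : ∑ s, C ((1 : Matrix σ σ K) i s) * X s = X i := by
      simp [Matrix.one_apply, apply_ite C, ite_mul]
    rw [transvection_apply, aeval_X]
    simp only [Matrix.add_apply, map_add, add_mul, Finset.sum_add_distrib, hone]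
    rcases eq_or_ne i t with rfl | hi
    · simp [B, hp, add_assoc]
    · simp [B, hi]

theorem isTriangularGraded_transvection_single {s t : σ} (hst : s < t) (hw : w s = w t)
    (hp : monomial (Finsupp.single s 1) (1 : K) ∈ supported K {i | i ≠ t}) (c : K) :
    IsTriangularGraded w (transvection t (c • ⟨_, hp⟩)) := by
  refine isTriangularGraded_transvection _ (Pi.single s c) 0 (fun i hi => ?_)
    (isWeightedHomogeneous_zero K w _) (zero_mem _) ?_
  · rcases eq_or_ne i s with rfl | hne
    · exact ⟨hst, hw⟩
    · simp [hne] at hi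
  · simp only [SetLike.mk_smul_mk, smul_eq_C_mul, Pi.single_apply, apply_ite C, C_0, ite_mul,
      zero_mul, Finset.sum_ite_eq', Finset.mem_univ, if_true, add_zero]
    rfl

theorem isTriangularGraded_transvection_monomial {t : σ} {ν : σ →₀ ℕ}
    (hν : Finsupp.weight w ν = w t) (hνs : ∀ s ∈ ν.support, w s < w t)
    (hp : monomial ν (1 : K) ∈ supported K {i | i ≠ t}) (c : K) :
    IsTriangularGraded w (transvection t (c • ⟨_, hp⟩)) :=
  isTriangularGraded_transvection _ 0 (monomial ν c) (by simp)
    (isWeightedHomogeneous_monomial w ν c hν) (monomial_mem_supported hνs c)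
    (by simp [smul_monomial])

end TriangularGraded

section StronglyStable

variable {K : Type*} [Field K] {N : ℕ} {w : Fin N → ℕ} {I : Ideal (MvPolynomial (Fin N) K)}

theorem StronglyStable.monomial_add_mem (hSS : StronglyStable w I) {t : Fin N}
    {ρ : Fin N →₀ ℕ} (hρ : monomial (Finsupp.single t 1 + ρ) (1 : K) ∈ I) :
    (∀ s < t, w s = w t → monomial (Finsupp.single s 1 + ρ) (1 : K) ∈ I) ∧
    (∀ ν : Fin N →₀ ℕ, Finsupp.weight w ν = w t → (∀ s ∈ ν.support, w s < w t) →
      monomial (ν + ρ) (1 : K) ∈ I) := by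
  have ht : t ∈ (Finsupp.single t 1 + ρ).support := by simp
  obtain ⟨hsame, hlower⟩ := hSS.2 _ hρ t ht
  rw [add_tsub_cancel_left] at hsame hlower
  exact ⟨fun s hst hw => add_comm ρ _ ▸ hsame s hst hw,
    fun ν hν hνs => add_comm ρ ν ▸ hlower ν hν hνs⟩

theorem StronglyStable.mul_mem_of_X_mul_mem (hSS : StronglyStable w I)
    {φ : MvPolynomial (Fin N) K ≃ₐ[K] MvPolynomial (Fin N) K} (hφ : IsTriangularGraded w φ)
    (t : Fin N) {f : MvPolynomial (Fin N) K} (hf : X t * f ∈ I) : φ (X t) * f ∈ I := by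
  obtain ⟨a, ψ, -, hw, htri, hψ, hφX⟩ := hφ
  have hrepl : ∀ ν, (∀ ρ, monomial (Finsupp.single t 1 + ρ) (1 : K) ∈ I →
      monomial (ν + ρ) (1 : K) ∈ I) → monomial ν 1 * f ∈ I := fun ν h =>
    monomial_mul_mem_of_forall_monomial_add_mem (exists_eq_span_monomial_iff.mp hSS.1) h hf
  rw [hφX t, add_mul, Finset.sum_mul]
  refine add_mem (Ideal.sum_mem _ fun s _ => ?_) ?_
  · by_cases has : a t s = 0
    · simp [has]
    have hws : w s = w t := by_contra fun h => has (hw t s (Ne.symm h))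
    rw [mul_assoc]
    refine I.mul_mem_left _ (hrepl _ fun ρ hρ => ?_)
    rcases (le_of_not_gt fun h => has (htri t s h)).lt_or_eq with hst | rfl
    · exact (hSS.monomial_add_mem hρ).1 s hst hws
    · exact hρ
  · rw [(ψ t).as_sum, Finset.sum_mul]
    refine Ideal.sum_mem _ fun ν hν => ?_
    rw [← mul_one (coeff ν (ψ t)), ← C_mul_monomial, mul_assoc]
    refine I.mul_mem_left _ (hrepl _ fun ρ hρ => (hSS.monomial_add_mem hρ).2 ν
      ((hψ t).1 (mem_support_iff.mp hν)) fun s hs => ?_)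
    exact mem_supported.mp (hψ t).2 ((mem_vars_iff_mem_support s).mpr ⟨ν, hν, hs⟩)

theorem StronglyStable.map_le (hSS : StronglyStable w I)
    {φ : MvPolynomial (Fin N) K ≃ₐ[K] MvPolynomial (Fin N) K} (hφ : IsTriangularGraded w φ) :
    I.map φ.toAlgHom ≤ I := by
  have key : ∀ μ (c : K) f, monomial μ c * f ∈ I → φ (monomial μ c) * f ∈ I := by
    refine induction_on_monomial (motive := fun p => ∀ f, p * f ∈ I → φ p * f ∈ I)
      (fun c f h => by rwa [← algebraMap_eq, φ.commutes]) fun p i hp f h => ?_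
    rw [map_mul, mul_assoc, mul_left_comm]
    refine hSS.mul_mem_of_X_mul_mem hφ i ?_
    rw [mul_left_comm]
    exact hp _ (by rwa [← mul_assoc])
  obtain ⟨A, hA⟩ := hSS.1
  conv_lhs => rw [hA]
  rw [Ideal.map_span, Ideal.span_le]
  rintro _ ⟨_, ⟨μ, hμ, rfl⟩, rfl⟩
  have hμI : monomial μ (1 : K) ∈ I := by
    rw [hA]
    exact Ideal.subset_span ⟨μ, hμ, rfl⟩
  simpa using key μ 1 1 (by rwa [mul_one])

theorem stronglyStable_of_forall_isTriangularGraded [CharZero K]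
    (hI : ∀ φ, IsTriangularGraded w φ → ∀ f ∈ I, φ f ∈ I) : StronglyStable w I := by
  refine ⟨exists_eq_span_monomial_iff.mpr fun f hf μ hμ =>
    monomial_mem_of_forall_scaleVars_mem (fun d => hI _ (isTriangularGraded_scaleVars d)) hf hμ,
    fun μ hμ t ht => ⟨fun s hst hw => ?_, fun ν hν hνs => ?_⟩⟩
  · have hp : monomial (Finsupp.single s 1) (1 : K) ∈ supported K {i | i ≠ t} :=
      X_mem_supported.mpr hst.ne
    have h := monomial_sub_single_mul_mem_of_forall_transvection_mem _
      (fun c _ => hI _ (isTriangularGraded_transvection_single hst hw hp c)) hμ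
      (Finsupp.mem_support_iff.mp ht)
    rwa [Subtype.coe_mk, monomial_mul, one_mul] at h
  · have hp := monomial_mem_supported (R := K) (fun s hs => ne_of_apply_ne w (hνs s hs).ne) 1
    have h := monomial_sub_single_mul_mem_of_forall_transvection_mem _
      (fun c _ => hI _ (isTriangularGraded_transvection_monomial hν hνs hp c)) hμ
      (Finsupp.mem_support_iff.mp ht)
    rwa [Subtype.coe_mk, monomial_mul, one_mul] at h

end StronglyStable

theorem t_fixed_iff_strongly_stable_general
    (K : Type*) [Field K] [CharZero K]
    (N : ℕ) (w : Fin N → ℕ)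
    (I : Ideal (MvPolynomial (Fin N) K)) :
    (∀ φ : MvPolynomial (Fin N) K ≃ₐ[K] MvPolynomial (Fin N) K,
      (∃ (a : Matrix (Fin N) (Fin N) K) (ψ : Fin N → MvPolynomial (Fin N) K),
        IsUnit a ∧
        (∀ t s, w t ≠ w s → a t s = 0) ∧
        (∀ t s, t < s → a t s = 0) ∧
        (∀ t, (ψ t).IsWeightedHomogeneous w (w t) ∧
          ψ t ∈ MvPolynomial.supported K {s : Fin N | w s < w t}) ∧
        (∀ t, φ (X t) = (∑ s, C (a t s) * X s) + ψ t)) →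
      Ideal.map φ.toAlgHom I = I)
    ↔ StronglyStable w I :=
  ⟨fun hfix => stronglyStable_of_forall_isTriangularGraded fun φ hφ _ hf =>
      hfix φ hφ ▸ Ideal.mem_map_of_mem φ.toAlgHom hf,
    fun hSS φ hφ => Ideal.map_eq_self_of_map_le φ.toRingEquiv (hSS.map_le hφ)⟩

/-- **T-fixed ideals are exactly the strongly stable ideals.**
A homogeneous ideal `I` of a weighted polynomial ring over an infinite field of
characteristic `0` is fixed by every upper triangular graded automorphism if and only if
it is a strongly stable (monomial) ideal. -/
theorem t_fixed_iff_strongly_stable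
    (K : Type*) [Field K] [CharZero K]
    (N : ℕ) (w : Fin N → ℕ) (hpos : ∀ k, 0 < w k) (hmono : Monotone w)
    (I : Ideal (MvPolynomial (Fin N) K))
    (hI : ∀ f ∈ I, ∀ d : ℕ, weightedHomogeneousComponent w d f ∈ I) :
    (∀ φ : MvPolynomial (Fin N) K ≃ₐ[K] MvPolynomial (Fin N) K,
      (∃ (a : Matrix (Fin N) (Fin N) K) (ψ : Fin N → MvPolynomial (Fin N) K),
        IsUnit a ∧
        (∀ t s, w t ≠ w s → a t s = 0) ∧
        (∀ t s, t < s → a t s = 0) ∧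
        (∀ t, (ψ t).IsWeightedHomogeneous w (w t) ∧
          ψ t ∈ MvPolynomial.supported K {s : Fin N | w s < w t}) ∧
        (∀ t, φ (X t) = (∑ s, C (a t s) * X s) + ψ t)) →
      Ideal.map φ.toAlgHom I = I)
    ↔ StronglyStable w I :=
  t_fixed_iff_strongly_stable_general K N w I
end

section
/- Let R be a weighted polynomial ring whose weights satisfy q_i ∣ q_{i+1} for i = 1,…,n−1, and let I ⊆ R be a strongly stable ideal. Then for any i = 1,…,n and j = 1,…,l_i one has I : X_{ij}^∞ = I : (X_{11},…,X_{ij})^∞, where the variables X_{11},…,X_{ij} are all the variables preceding or equal to X_{ij} in the fixed order. -/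
/-! Only `⊆` needs an argument. By strong stability, one factor `X t` of a monomial of `I` can be
traded for `w t / w u` factors `X u` of an earlier variable; this is an integer thanks to the
divisibility chain. So if `f * X t ^ s ∈ I`, every monomial `x^μ` of `f` satisfies
`x^μ * X u ^ (s * (w t / w u)) ∈ I` for all `u < t`. A monomial of degree `(t + 1) * (s * w t)`
in `X 0, …, X t` has, by pigeonhole, some exponent at least `s * w t`; it is therefore divisible by
`X t ^ s` or by such a power of an earlier `X u`, and multiplies `f` into `I`. -/

open MvPolynomial

theorem Fin.dvd_of_le_of_forall_dvd_succ {M : Type*} [CommMonoidWithZero M] {N : ℕ}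
    {w : Fin N → M} (hdvd : ∀ k : Fin N, ∀ h : (k : ℕ) + 1 < N, w k ∣ w ⟨(k : ℕ) + 1, h⟩)
    {u t : Fin N} (h : u ≤ t) : w u ∣ w t := by
  -- extending by `0` keeps the chain `v n ∣ v (n + 1)` unbroken past `N`
  let v : ℕ → M := fun n => if h : n < N then w ⟨n, h⟩ else 0
  have hv : ∀ n, v n ∣ v (n + 1) := by
    intro n
    by_cases h : n + 1 < N
    · simpa [v, h, show n < N by omega] using hdvd ⟨n, by omega⟩ h
    · simp [v, h]
  simpa [v] using Nat.rel_of_forall_rel_succ_of_le (· ∣ ·) hv (Fin.le_def.1 h)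

theorem Finsupp.exists_le_apply_of_card_mul_le_degree {σ : Type*} {ν : σ →₀ ℕ} {T : Finset σ}
    (hT : ν.support ⊆ T) (hne : T.Nonempty) {m : ℕ} (h : T.card * m ≤ ν.degree) :
    ∃ u ∈ T, m ≤ ν u := by
  refine Finset.exists_le_of_sum_le hne ?_
  rwa [Finset.sum_const, smul_eq_mul,
    ← Finset.sum_subset hT fun u _ hu => Finsupp.notMem_support_iff.1 hu]

namespace MvPolynomial

variable {σ R : Type*} [CommSemiring R] {I : Ideal (MvPolynomial σ R)}

theorem monomial_mem_of_le {μ μ' : σ →₀ ℕ} (h : monomial μ (1 : R) ∈ I) (hle : μ ≤ μ') :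
    monomial μ' (1 : R) ∈ I := by
  have : monomial μ' (1 : R) = monomial (μ' - μ) 1 * monomial μ 1 := by
    rw [monomial_mul, tsub_add_cancel_of_le hle, mul_one]
  exact this ▸ I.mul_mem_left _ h

theorem monomial_mem_of_mem_support {A : Set (σ →₀ ℕ)}
    (hI : I = Ideal.span ((fun μ => monomial μ (1 : R)) '' A)) {f : MvPolynomial σ R}
    (hf : f ∈ I) {μ : σ →₀ ℕ} (hμ : μ ∈ f.support) : monomial μ (1 : R) ∈ I := by
  rw [hI] at hf
  obtain ⟨α, hα, hle⟩ := mem_ideal_span_monomial_image.1 hf μ hμ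
  exact monomial_mem_of_le (hI ▸ Ideal.subset_span ⟨α, hα, rfl⟩) hle

theorem mul_monomial_mem_iff {A : Set (σ →₀ ℕ)}
    (hI : I = Ideal.span ((fun μ => monomial μ (1 : R)) '' A)) {f : MvPolynomial σ R}
    {ν : σ →₀ ℕ} :
    f * monomial ν (1 : R) ∈ I ↔ ∀ μ ∈ f.support, monomial (μ + ν) (1 : R) ∈ I := by
  refine ⟨fun h μ hμ => monomial_mem_of_mem_support hI h ?_, fun h => ?_⟩
  · rwa [mem_support_iff, coeff_mul_monomial, mul_one, ← mem_support_iff]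
  · rw [f.as_sum, Finset.sum_mul]
    refine Ideal.sum_mem _ fun μ hμ => ?_
    rw [monomial_mul, ← C_mul_monomial]
    exact I.mul_mem_left _ (h μ hμ)

theorem span_X_image_pow_le (T : Set σ) (n : ℕ) :
    Ideal.span (X '' T : Set (MvPolynomial σ R)) ^ n ≤
      Ideal.span ((fun ν => monomial ν (1 : R)) '' {ν | ν.degree = n ∧ ↑ν.support ⊆ T}) := by
  induction n with
  | zero =>
    rw [pow_zero, Ideal.one_eq_top, top_le_iff, Ideal.eq_top_iff_one]
    exact Ideal.subset_span ⟨0, by simp, by simp⟩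
  | succ n ih =>
    rw [pow_succ]
    refine (Ideal.mul_mono_left ih).trans ?_
    rw [Ideal.span_mul_span', Ideal.span_le]
    rintro _ ⟨_, ⟨ν, ⟨hdeg, hsupp⟩, rfl⟩, _, ⟨u, hu, rfl⟩, rfl⟩
    refine Ideal.subset_span ⟨ν + Finsupp.single u 1, ⟨by simp [hdeg], ?_⟩, ?_⟩
    · classical
      refine (Finset.coe_subset.2 Finsupp.support_add).trans ?_
      simpa [Set.insert_subset_iff, hu] using hsupp
    · simp [X, monomial_mul]

end MvPolynomial

namespace StronglyStable

variable {K : Type*} [Field K] {N : ℕ} {w : Fin N → ℕ} {I : Ideal (MvPolynomial (Fin N) K)}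
  {u t : Fin N}

theorem monomial_exchange (hI : StronglyStable w I) (hut : u < t) (hwt : 0 < w t)
    (hw : w u ∣ w t) {μ : Fin N →₀ ℕ} (h : monomial (μ + Finsupp.single t 1) (1 : K) ∈ I) :
    monomial (μ + Finsupp.single u (w t / w u)) (1 : K) ∈ I := by
  obtain ⟨hsame, hlower⟩ := hI.2 _ h t (by simp)
  rw [add_tsub_cancel_right] at hsame hlower
  rcases (Nat.le_of_dvd hwt hw).lt_or_eq with hlt | heq
  · refine hlower _ ?_ fun s hs => ?_
    · rw [Finsupp.weight_single, smul_eq_mul, Nat.div_mul_cancel hw]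
    · rwa [Finset.mem_singleton.1 (Finsupp.support_single_subset hs)]
  · rw [heq, Nat.div_self hwt]
    exact hsame u hut heq

theorem monomial_exchange_pow (hI : StronglyStable w I) (hut : u < t) (hwt : 0 < w t)
    (hw : w u ∣ w t) {s : ℕ} {μ : Fin N →₀ ℕ}
    (h : monomial (μ + Finsupp.single t s) (1 : K) ∈ I) :
    monomial (μ + Finsupp.single u (s * (w t / w u))) (1 : K) ∈ I := by
  induction s generalizing μ with
  | zero => simpa using h
  | succ s ih =>
    rw [Finsupp.single_add, ← add_assoc] at h
    have h' := hI.monomial_exchange hut hwt hw h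
    rw [add_right_comm] at h'
    rw [add_one_mul, Finsupp.single_add, add_comm (Finsupp.single u (s * _)), ← add_assoc]
    exact ih h'

theorem monomial_add_mem_s6 (hI : StronglyStable w I) (hwt : 0 < w t)
    (hdvd : ∀ u ≤ t, w u ∣ w t) {s : ℕ} {μ ν : Fin N →₀ ℕ}
    (h : monomial (μ + Finsupp.single t s) (1 : K) ∈ I) (hν : ν.support ⊆ Finset.Iic t)
    (hdeg : (Finset.Iic t).card * (s * w t) ≤ ν.degree) :
    monomial (μ + ν) (1 : K) ∈ I := by
  obtain ⟨u, hu, hνu⟩ :=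
    Finsupp.exists_le_apply_of_card_mul_le_degree hν ⟨t, Finset.mem_Iic.2 le_rfl⟩ hdeg
  rcases (Finset.mem_Iic.1 hu).lt_or_eq with hut | rfl
  · refine monomial_mem_of_le (hI.monomial_exchange_pow hut hwt (hdvd u hut.le) h)
      ((add_le_add_iff_left μ).2 (Finsupp.single_le_iff.2 ?_))
    exact (Nat.mul_le_mul_left s (Nat.div_le_self _ _)).trans hνu
  · exact monomial_mem_of_le h
      ((add_le_add_iff_left μ).2 (Finsupp.single_le_iff.2 ((Nat.le_mul_of_pos_right s hwt).trans hνu)))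

theorem colon_span_X_pow_le (hI : StronglyStable w I) (hwt : 0 < w t)
    (hdvd : ∀ u ≤ t, w u ∣ w t) (s : ℕ) :
    I.colon (Ideal.span {(X t : MvPolynomial (Fin N) K) ^ s}) ≤
      I.colon (Ideal.span ((fun u => (X u : MvPolynomial (Fin N) K)) '' {u | u ≤ t}) ^
        ((Finset.Iic t).card * (s * w t)) : Ideal (MvPolynomial (Fin N) K)) := by
  obtain ⟨A, hA⟩ := hI.1
  intro f hf
  rw [Ideal.mem_colon_span_singleton, X_pow_eq_monomial, mul_monomial_mem_iff hA] at hf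
  refine Submodule.colon_mono le_rfl (span_X_image_pow_le _ _) ?_
  rw [Ideal.colon_span, Submodule.mem_colon]
  rintro _ ⟨ν, ⟨hdeg, hsupp⟩, rfl⟩
  rw [smul_eq_mul, mul_monomial_mem_iff hA]
  exact fun μ hμ => hI.monomial_add_mem_s6 hwt hdvd (hf μ hμ)
    (fun u hu => Finset.mem_Iic.2 (hsupp hu)) hdeg.ge

end StronglyStable

theorem saturation_strongly_stable_general
    (K : Type*) [Field K]
    (N : ℕ) (w : Fin N → ℕ) (hpos : ∀ k, 0 < w k)
    (hdvd : ∀ k : Fin N, ∀ h : (k : ℕ) + 1 < N, w k ∣ w ⟨(k : ℕ) + 1, h⟩)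
    (I : Ideal (MvPolynomial (Fin N) K)) (hI : StronglyStable w I)
    (t : Fin N) :
    (⨆ s : ℕ, I.colon (Ideal.span {(X t : MvPolynomial (Fin N) K) ^ s}))
      = ⨆ s : ℕ,
          I.colon ((Ideal.span ((fun u => (X u : MvPolynomial (Fin N) K)) '' {u | u ≤ t})) ^ s : Ideal (MvPolynomial (Fin N) K)) := by
  refine le_antisymm (iSup_le fun s => ?_) (iSup_le fun s => ?_)
  · exact le_iSup_of_le _ (hI.colon_span_X_pow_le (hpos t)
      (fun u hu => Fin.dvd_of_le_of_forall_dvd_succ hdvd hu) s)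
  · have hXt : X t ∈ Ideal.span ((fun u => (X u : MvPolynomial (Fin N) K)) '' {u | u ≤ t}) :=
      Ideal.subset_span ⟨t, le_refl t, rfl⟩
    exact le_iSup_of_le s (Submodule.colon_mono le_rfl
      (Ideal.span_le.2 (Set.singleton_subset_iff.2 (Ideal.pow_mem_pow hXt s))))

/-- **Saturations of strongly stable ideals.**
Let `R` be a weighted polynomial ring (infinite base field of characteristic `0`, positive
weights listed in increasing order) whose weights satisfy the divisibility condition
`q_i ∣ q_{i+1}`, and let `I` be a strongly stable ideal.  Then for every variable `X t`,
`I : X t ^ ∞ = I : (X 1, …, X t)^∞`, where `X 1, …, X t` are the variables preceding or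
equal to `X t`. -/
theorem saturation_strongly_stable
    (K : Type*) [Field K] [CharZero K]
    (N : ℕ) (w : Fin N → ℕ) (hpos : ∀ k, 0 < w k) (hmono : Monotone w)
    (hdvd : ∀ k : Fin N, ∀ h : (k : ℕ) + 1 < N, w k ∣ w ⟨(k : ℕ) + 1, h⟩)
    (I : Ideal (MvPolynomial (Fin N) K)) (hI : StronglyStable w I)
    (t : Fin N) :
    (⨆ s : ℕ, I.colon (Ideal.span {(X t : MvPolynomial (Fin N) K) ^ s}))
      = ⨆ s : ℕ,
          I.colon ((Ideal.span ((fun u => (X u : MvPolynomial (Fin N) K)) '' {u | u ≤ t})) ^ s : Ideal (MvPolynomial (Fin N) K)) :=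
  saturation_strongly_stable_general K N w hpos hdvd I hI t
end

section
/- Let q = lcm(q_1,…,q_n) and let G ∈ ℕ be such that every monomial of weighted degree m + hq with m > G is divisible by a monomial of weighted degree hq, for every h ∈ ℕ. Let I ⊂ R be a homogeneous ideal generated in degrees ≤ d. If the graded component I_i is spanned as a K-vector space by a lexsegment for every i ≤ d + q + G, then I is a lexicographic ideal (i.e. every graded component of I is spanned by a lexsegment). -/
open MvPolynomial

/-- The lexicographic order on exponents of monomials (`LexLT μ ν` means `X^μ < X^ν`),
for the variable order `X 1 > X 2 > … > X N`. -/
def LexLT {n : ℕ} (μ ν : Fin n →₀ ℕ) : Prop :=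
  ∃ k, μ k < ν k ∧ ∀ s, s < k → μ s = ν s

/-- The degree-`i` component of the ideal `I` is spanned, as a `K`-vector space, by a
lexsegment: there is a set `L` of exponents of monomials of weighted degree `i`, closed
under passing to lexicographically larger monomials of the same degree, such that the
homogeneous elements of degree `i` of `I` are exactly the `K`-linear span of the
monomials `X^μ`, `μ ∈ L`. -/
def LexSegComponent {K : Type*} [Field K] {n : ℕ} (w : Fin n → ℕ)
    (I : Ideal (MvPolynomial (Fin n) K)) (i : ℕ) : Prop :=
  ∃ L : Set (Fin n →₀ ℕ),
    (∀ μ ∈ L, Finsupp.weight w μ = i) ∧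
    (∀ μ ∈ L, ∀ ν : Fin n →₀ ℕ, Finsupp.weight w ν = i → LexLT μ ν → ν ∈ L) ∧
    (∀ f : MvPolynomial (Fin n) K,
      (f ∈ I ∧ f.IsWeightedHomogeneous w i) ↔
        f ∈ Submodule.span K
          ((fun μ => (monomial μ (1 : K) : MvPolynomial (Fin n) K)) '' L))

/-!
Since the components of degree `≤ d` are spanned by monomials, `I` is the monomial ideal generated
by its monomials of degree `≤ d`. Let `X^χ ∈ I` be divisible by such a generator `X^τ`, and let
`X^ν >lex X^χ` have the same degree, first differing from `χ` at the variable `k`. It suffices to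
find a multiple `X^σ'` of `X^τ` and a divisor `X^ξ` of `X^ν` with `X^σ' <lex X^ξ` of equal degree
`≤ deg τ + q + G`, since the lexsegment property in that degree then puts `X^ξ`, hence `X^ν`, in
`I`. If the part of `ν` from `k` on is light, splice it (and the matching part of `χ`) onto the
part of `τ` below `k`. Otherwise strip variables off `ν` from `k` on, keeping an excess over `τ`
at `k`, until the degree drops into the window `(deg τ + G, deg τ + G + q]`; the defect is a
multiple of the gcd of the weights beyond `k` exceeding `G`, hence the weight of a monomial in
those variables (Frobenius plus the defining property of `G`), by which `X^τ` is multiplied.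
-/

theorem exists_mem_Ioc_of_descent {α : Type*} {p : α → Prop} (f : α → ℕ) {A q : ℕ}
    (step : ∀ x, p x → A + q < f x → ∃ y, p y ∧ f x ≤ f y + q ∧ f y < f x)
    {x : α} (hx : p x) (hAx : A < f x) : ∃ y, p y ∧ A < f y ∧ f y ≤ A + q := by
  induction hfx : f x using Nat.strong_induction_on generalizing x with
  | _ m ih =>
    subst hfx
    by_cases hbig : A + q < f x
    · obtain ⟨y, hy, hxy, hyx⟩ := step x hx hbig
      exact ih (f y) hyx hy (by omega) rfl
    · exact ⟨x, hx, hAx, by omega⟩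

namespace Finsupp

variable {ι : Type*} (w : ι → ℕ)

def SplitsOffMultiples (q G : ℕ) : Prop :=
  ∀ (β : ι →₀ ℕ) (H : ℕ), G + H * q < weight w β → ∃ ρ ≤ β, weight w ρ = H * q

theorem weight_tsub_add {α β : ι →₀ ℕ} (h : β ≤ α) :
    weight w (α - β) + weight w β = weight w α := by
  rw [← map_add, tsub_add_cancel_of_le h]

theorem weight_mem_closure_image {S : Set ι} {θ : ι →₀ ℕ} (hθ : ↑θ.support ⊆ S) :
    weight w θ ∈ AddSubmonoid.closure (w '' S) := by
  rw [weight_apply]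
  exact AddSubmonoid.sum_mem _ fun j hj =>
    AddSubmonoid.nsmul_mem _ (AddSubmonoid.subset_closure (Set.mem_image_of_mem w (hθ hj))) _

theorem exists_support_subset_weight_eq {S : Set ι} {m : ℕ}
    (hm : m ∈ AddSubmonoid.closure (w '' S)) :
    ∃ θ : ι →₀ ℕ, ↑θ.support ⊆ S ∧ weight w θ = m := by
  induction hm using AddSubmonoid.closure_induction with
  | mem _ h =>
    obtain ⟨j, hj, rfl⟩ := h
    exact ⟨single j 1, fun i hi => by rwa [Finset.mem_singleton.mp (support_single_subset hi)],
      by simp [weight_single]⟩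
  | zero => exact ⟨0, by simp, map_zero _⟩
  | add _ _ _ _ h₁ h₂ =>
    classical
    obtain ⟨θ₁, hθ₁, rfl⟩ := h₁
    obtain ⟨θ₂, hθ₂, rfl⟩ := h₂
    refine ⟨θ₁ + θ₂, fun j hj => ?_, map_add _ _ _⟩
    rcases Finset.mem_union.mp (support_add hj) with h | h
    exacts [hθ₁ h, hθ₂ h]

theorem setGcd_dvd_weight {S : Set ι} {θ : ι →₀ ℕ} (hθ : ↑θ.support ⊆ S) :
    Nat.setGcd (w '' S) ∣ weight w θ :=
  Nat.setGcd_dvd_of_mem_closure (weight_mem_closure_image w hθ)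

/-- For large `N`, `W + N * q` is a weight by the Frobenius property of numerical semigroups;
`SplitsOffMultiples` then splits off a factor of weight `N * q`. -/
theorem exists_support_subset_weight_eq_of_lt {S : Set ι} {q G W : ℕ} (hq : 0 < q)
    (hgq : Nat.setGcd (w '' S) ∣ q)
    (hG : SplitsOffMultiples w q G)
    (hGW : G < W) (hgW : Nat.setGcd (w '' S) ∣ W) :
    ∃ θ : ι →₀ ℕ, ↑θ.support ⊆ S ∧ weight w θ = W := by
  obtain ⟨N, hN⟩ := Nat.exists_mem_closure_of_ge (w '' S)
  obtain ⟨β, hβS, hβ⟩ := exists_support_subset_weight_eq w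
    (hN (W + N * q) (by nlinarith) (dvd_add hgW (hgq.mul_left N)))
  obtain ⟨ρ, hρβ, hρ⟩ := hG β N (by omega)
  refine ⟨β - ρ, (Finset.coe_subset.mpr (support_mono tsub_le_self)).trans hβS, ?_⟩
  have := weight_tsub_add w hρβ
  omega

section LinearOrder

variable [LinearOrder ι]

noncomputable def splice (α : ι →₀ ℕ) (k : ι) (c : ℕ) (β : ι →₀ ℕ) : ι →₀ ℕ :=
  α.filter (· < k) + single k c + β.filter (k < ·)

variable {α β : ι →₀ ℕ} {k j : ι} {c : ℕ}

@[simp] theorem splice_apply_of_lt (h : j < k) : α.splice k c β j = α j := by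
  simp [splice, h, h.ne, h.not_gt]

@[simp] theorem splice_apply_self : α.splice k c β k = c := by
  simp [splice]

@[simp] theorem splice_apply_of_gt (h : k < j) : α.splice k c β j = β j := by
  simp [splice, h, h.ne', h.not_gt]

theorem splice_self (α : ι →₀ ℕ) (k : ι) : α.splice k (α k) α = α := by
  ext j
  rcases lt_trichotomy j k with h | rfl | h
  · simp [h]
  · simp
  · simp [h]

theorem splice_le_iff {γ : ι →₀ ℕ} :
    α.splice k c β ≤ γ ↔ (∀ j < k, α j ≤ γ j) ∧ c ≤ γ k ∧ ∀ j, k < j → β j ≤ γ j := by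
  refine ⟨fun h => ⟨fun j hj => ?_, ?_, fun j hj => ?_⟩, fun ⟨hlt, hk, hgt⟩ j => ?_⟩
  · simpa [hj] using h j
  · simpa using h k
  · simpa [hj] using h j
  · rcases lt_trichotomy j k with h | rfl | h
    · simpa [h] using hlt j h
    · simpa using hk
    · simpa [h] using hgt j h

theorem le_splice_iff {γ : ι →₀ ℕ} :
    γ ≤ α.splice k c β ↔ (∀ j < k, γ j ≤ α j) ∧ γ k ≤ c ∧ ∀ j, k < j → γ j ≤ β j := by
  refine ⟨fun h => ⟨fun j hj => ?_, ?_, fun j hj => ?_⟩, fun ⟨hlt, hk, hgt⟩ j => ?_⟩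
  · simpa [hj] using h j
  · simpa using h k
  · simpa [hj] using h j
  · rcases lt_trichotomy j k with h | rfl | h
    · simpa [h] using hlt j h
    · simpa using hk
    · simpa [h] using hgt j h

theorem weight_splice (α : ι →₀ ℕ) (k : ι) (c : ℕ) (β : ι →₀ ℕ) :
    weight w (α.splice k c β) =
      weight w (α.filter (· < k)) + c * w k + weight w (β.filter (k < ·)) := by
  simp [splice, weight_single]

theorem weight_eq_filter_lt_add_filter_gt (α : ι →₀ ℕ) (k : ι) :
    weight w α = weight w (α.filter (· < k)) + α k * w k + weight w (α.filter (k < ·)) := by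
  conv_lhs => rw [← splice_self α k]
  exact weight_splice w α k (α k) α

theorem filter_lt_eq_of_forall_lt (h : ∀ j < k, α j = β j) :
    α.filter (· < k) = β.filter (· < k) := by
  ext j
  simp only [filter_apply]
  split_ifs with hj
  exacts [h j hj, rfl]

theorem coe_support_filter_gt_subset (α : ι →₀ ℕ) (k : ι) :
    ↑(α.filter (k < ·)).support ⊆ Set.Ioi k :=
  fun _ hj => (Finset.mem_filter.mp hj).2

end LinearOrder

end Finsupp

open Finsupp

/-- The last condition makes `weight w ξ - weight w σ` a multiple of `g`, for `g` the gcd of the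
weights beyond `k`. -/
def IsExchangeCandidate {n : ℕ} (w : Fin n → ℕ) (g : ℕ) (σ ν : Fin n →₀ ℕ) (k : Fin n)
    (ξ : Fin n →₀ ℕ) : Prop :=
  ξ ≤ ν ∧ (∀ j < k, ξ j = σ j) ∧ σ k < ξ k ∧ g ∣ (ξ k - σ k) * w k

section Exchange

variable {n : ℕ} {w : Fin n → ℕ} {g q G : ℕ} {σ μ ν ξ : Fin n →₀ ℕ} {k : Fin n}

theorem exists_lexLT_exchange_of_le {B : ℕ} (hσμ : σ ≤ μ) (hk : μ k < ν k)
    (hpre : ∀ j < k, μ j = ν j) (hwt : weight w μ = weight w ν)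
    (hle : ν k * w k + weight w (ν.filter (k < ·)) ≤
      σ k * w k + weight w (σ.filter (k < ·)) + B) :
    ∃ σ' ξ, σ ≤ σ' ∧ ξ ≤ ν ∧ weight w σ' = weight w ξ ∧ weight w ξ ≤ weight w σ + B ∧
      LexLT σ' ξ := by
  have hμ := weight_eq_filter_lt_add_filter_gt w μ k
  have hν := weight_eq_filter_lt_add_filter_gt w ν k
  have hσ := weight_eq_filter_lt_add_filter_gt w σ k
  rw [filter_lt_eq_of_forall_lt hpre] at hμ
  refine ⟨σ.splice k (μ k) μ, σ.splice k (ν k) ν,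
    le_splice_iff.mpr ⟨fun j _ => le_rfl, hσμ k, fun j _ => hσμ j⟩,
    splice_le_iff.mpr ⟨fun j hj => hpre j hj ▸ hσμ j, le_rfl, fun j _ => le_rfl⟩, ?_, ?_,
    ⟨k, by simpa using hk, fun j hj => by simp [hj]⟩⟩
  · rw [weight_splice, weight_splice]
    omega
  · rw [weight_splice]
    omega

theorem IsExchangeCandidate.exists_step (hpos : ∀ j, 0 < w j) (hq : 0 < q)
    (hdvd : ∀ j, w j ∣ q) (hgq : g ∣ q) (hξ : IsExchangeCandidate w g σ ν k ξ)
    (hbig : weight w σ + G + q < weight w ξ) :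
    ∃ ξ', IsExchangeCandidate w g σ ν k ξ' ∧
      weight w ξ ≤ weight w ξ' + q ∧ weight w ξ' < weight w ξ := by
  obtain ⟨hξν, hlow, hσξ, hgξ⟩ := hξ
  by_cases hupper : ∃ j, k < j ∧ ξ j ≠ 0
  · obtain ⟨j, hkj, hj⟩ := hupper
    have hwt := weight_sub_single_add (w := w) hj
    have hwjq := Nat.le_of_dvd hq (hdvd j)
    have hwj := hpos j
    refine ⟨ξ - single j 1, ⟨tsub_le_self.trans hξν, fun i hi => ?_, ?_, ?_⟩, by omega, by omega⟩
    · simp [(hi.trans hkj).ne', hlow i hi]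
    · simpa [single_apply, hkj.ne] using hσξ
    · simpa [single_apply, hkj.ne] using hgξ
  · push Not at hupper
    obtain ⟨M, hM⟩ := hdvd k
    have hξw := weight_eq_filter_lt_add_filter_gt w ξ k
    have hξupper : ξ.filter (k < ·) = 0 := (filter_eq_zero_iff _ _).mpr hupper
    rw [hξupper, filter_lt_eq_of_forall_lt hlow, map_zero] at hξw
    have hσw := weight_eq_filter_lt_add_filter_gt w σ k
    have hMξ : σ k + M < ξ k := Nat.lt_of_mul_lt_mul_right (a := w k) (by rw [add_mul]; nlinarith)
    have hwt := weight_tsub_add w (single_le_iff.mpr (by omega : M ≤ ξ k))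
    rw [weight_single, smul_eq_mul, mul_comm, ← hM] at hwt
    refine ⟨ξ - single k M, ⟨tsub_le_self.trans hξν, fun i hi => by simp [hi.ne, hlow i hi],
      by simp; omega, ?_⟩, by omega, by omega⟩
    rw [show ξ k - σ k = (ξ k - M - σ k) + M by omega, add_mul, mul_comm M, ← hM,
      Nat.dvd_add_left hgq] at hgξ
    simpa using hgξ

theorem setGcd_dvd_sub_mul_of_weight_eq (hpre : ∀ j < k, μ j = ν j) (hwt : weight w μ = weight w ν)
    (hk : μ k ≤ ν k) : Nat.setGcd (w '' Set.Ioi k) ∣ (ν k - μ k) * w k := by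
  have hμ := weight_eq_filter_lt_add_filter_gt w μ k
  have hν := weight_eq_filter_lt_add_filter_gt w ν k
  rw [filter_lt_eq_of_forall_lt hpre] at hμ
  have hkw : μ k * w k ≤ ν k * w k := Nat.mul_le_mul_right _ hk
  have h : (ν k - μ k) * w k + weight w (ν.filter (k < ·)) = weight w (μ.filter (k < ·)) := by
    rw [Nat.sub_mul]
    omega
  exact (Nat.dvd_add_left (setGcd_dvd_weight w (coe_support_filter_gt_subset ν k))).mp
    (h ▸ setGcd_dvd_weight w (coe_support_filter_gt_subset μ k))

theorem exists_isExchangeCandidate (hq : 0 < q) (hσμ : σ ≤ μ) (hk : μ k < ν k)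
    (hpre : ∀ j < k, μ j = ν j) (hwt : weight w μ = weight w ν) (hwk : w k ∣ q)
    (hgq : Nat.setGcd (w '' Set.Ioi k) ∣ q)
    (hbig : σ k * w k + weight w (σ.filter (k < ·)) + q + G <
      ν k * w k + weight w (ν.filter (k < ·))) :
    ∃ ξ, IsExchangeCandidate w (Nat.setGcd (w '' Set.Ioi k)) σ ν k ξ ∧
      weight w σ + G < weight w ξ := by
  obtain ⟨M, hM⟩ := hwk
  have hMpos : 0 < M := Nat.pos_of_mul_pos_left (hM ▸ hq)
  -- Lowering `ν k` by `r < M = q / w k` costs less than `q` in weight, and makes the excess over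
  -- `σ k` congruent to `ν k - μ k` modulo `M`.
  set r := (μ k - σ k) % M
  have hrM : r * w k < q := by
    rw [hM, mul_comm (w k)]
    exact Nat.mul_lt_mul_of_pos_right (Nat.mod_lt _ hMpos) (Nat.pos_of_mul_pos_right (hM ▸ hq))
  have hrle : r ≤ μ k - σ k := Nat.mod_le _ _
  have hσk := hσμ k
  refine ⟨σ.splice k (ν k - r) ν, ⟨splice_le_iff.mpr ⟨fun j hj => hpre j hj ▸ hσμ j, by omega,
    fun _ _ => le_rfl⟩, fun j hj => by simp [hj], by simp; omega, ?_⟩, ?_⟩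
  · have hdiv : ν k - r - σ k = (ν k - μ k) + M * ((μ k - σ k) / M) := by
      have := Nat.mod_add_div (μ k - σ k) M
      omega
    rw [splice_apply_self, hdiv, add_mul, show M * ((μ k - σ k) / M) * w k = (μ k - σ k) / M * q by
      rw [hM]; ring]
    exact dvd_add (setGcd_dvd_sub_mul_of_weight_eq hpre hwt hk.le) (hgq.mul_left _)
  · have hσw := weight_eq_filter_lt_add_filter_gt w σ k
    have hrν : r * w k ≤ ν k * w k := Nat.mul_le_mul_right _ (by omega)
    rw [weight_splice, Nat.sub_mul]
    omega

theorem IsExchangeCandidate.exists_lexLT_exchange (hq : 0 < q) (hG : SplitsOffMultiples w q G)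
    (hgq : Nat.setGcd (w '' Set.Ioi k) ∣ q)
    (hξ : IsExchangeCandidate w (Nat.setGcd (w '' Set.Ioi k)) σ ν k ξ)
    (hlo : weight w σ + G < weight w ξ) (hhi : weight w ξ ≤ weight w σ + G + q) :
    ∃ σ' ξ', σ ≤ σ' ∧ ξ' ≤ ν ∧ weight w σ' = weight w ξ' ∧
      weight w ξ' ≤ weight w σ + (q + G) ∧ LexLT σ' ξ' := by
  obtain ⟨hξν, hlow, hσξ, hgξ⟩ := hξ
  have hξw := weight_eq_filter_lt_add_filter_gt w ξ k
  have hσw := weight_eq_filter_lt_add_filter_gt w σ k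
  rw [filter_lt_eq_of_forall_lt hlow] at hξw
  have hkw : σ k * w k ≤ ξ k * w k := Nat.mul_le_mul_right _ hσξ.le
  have h : weight w ξ - weight w σ + weight w (σ.filter (k < ·)) =
      (ξ k - σ k) * w k + weight w (ξ.filter (k < ·)) := by
    rw [Nat.sub_mul]
    omega
  have hgW := (Nat.dvd_add_left (setGcd_dvd_weight w (coe_support_filter_gt_subset σ k))).mp
    (h ▸ dvd_add hgξ (setGcd_dvd_weight w (coe_support_filter_gt_subset ξ k)))
  obtain ⟨θ, hθS, hθ⟩ := exists_support_subset_weight_eq_of_lt w hq hgq hG (by omega) hgW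
  have hθ0 : ∀ j, ¬ k < j → θ j = 0 := fun j hj => notMem_support_iff.mp fun h => hj (hθS h)
  refine ⟨σ + θ, ξ, le_self_add, hξν, by rw [map_add]; omega, by omega,
    ⟨k, by simpa [hθ0 k (lt_irrefl k)] using hσξ, fun j hj => ?_⟩⟩
  simp [hθ0 j (lt_asymm hj), hlow j hj]

theorem exists_lexLT_exchange (hpos : ∀ j, 0 < w j) (hq : 0 < q) (hdvd : ∀ j, w j ∣ q)
    (hG : SplitsOffMultiples w q G) (hσμ : σ ≤ μ) (hlt : LexLT μ ν)
    (hwt : weight w μ = weight w ν) :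
    ∃ σ' ξ, σ ≤ σ' ∧ ξ ≤ ν ∧ weight w σ' = weight w ξ ∧
      weight w ξ ≤ weight w σ + (q + G) ∧ LexLT σ' ξ := by
  obtain ⟨k, hk, hpre⟩ := hlt
  by_cases hle : ν k * w k + weight w (ν.filter (k < ·)) ≤
      σ k * w k + weight w (σ.filter (k < ·)) + (q + G)
  · exact exists_lexLT_exchange_of_le hσμ hk hpre hwt hle
  have hgk := setGcd_dvd_sub_mul_of_weight_eq hpre hwt hk.le
  have hgq : Nat.setGcd (w '' Set.Ioi k) ∣ q := by
    obtain ⟨_, ⟨j, hj, rfl⟩, -⟩ := Nat.exists_ne_zero_of_setGcd_ne_zero fun h0 => by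
      rw [h0, zero_dvd_iff] at hgk
      have := Nat.mul_pos (Nat.sub_pos_of_lt hk) (hpos k)
      omega
    exact (Nat.setGcd_dvd_of_mem (Set.mem_image_of_mem w hj)).trans (hdvd j)
  obtain ⟨ξ₀, hξ₀, hlo₀⟩ :=
    exists_isExchangeCandidate (G := G) hq hσμ hk hpre hwt (hdvd k) hgq (by omega)
  obtain ⟨ξ, hξ, hlo, hhi⟩ := exists_mem_Ioc_of_descent (weight w)
    (fun _ hξ hbig => hξ.exists_step hpos hq hdvd hgq hbig) hξ₀ hlo₀
  exact hξ.exists_lexLT_exchange hq hG hgq hlo hhi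

end Exchange

namespace MvPolynomial

section MonomialIdeal

variable {R σ : Type*} [CommSemiring R]

theorem monomial_mem_of_le_s15 {I : Ideal (MvPolynomial σ R)} {τ χ : σ →₀ ℕ} (h : τ ≤ χ)
    (hτ : monomial τ (1 : R) ∈ I) : monomial χ (1 : R) ∈ I :=
  I.mem_of_dvd (monomial_dvd_monomial.mpr ⟨Or.inr h, one_dvd _⟩) hτ

variable [Nontrivial R] {T : Set (σ →₀ ℕ)}

theorem monomial_mem_ideal_span_monomial_image_iff {χ : σ →₀ ℕ} :
    monomial χ (1 : R) ∈ Ideal.span ((fun τ => monomial τ (1 : R)) '' T) ↔ ∃ τ ∈ T, τ ≤ χ := by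
  classical
  rw [mem_ideal_span_monomial_image, support_monomial, if_neg one_ne_zero]
  simp

theorem mem_ideal_span_monomial_image_iff_monomial_mem {f : MvPolynomial σ R} :
    f ∈ Ideal.span ((fun τ => monomial τ (1 : R)) '' T) ↔
      ∀ χ ∈ f.support, monomial χ (1 : R) ∈ Ideal.span ((fun τ => monomial τ (1 : R)) '' T) := by
  rw [mem_ideal_span_monomial_image]
  simp_rw [monomial_mem_ideal_span_monomial_image_iff]

end MonomialIdeal

end MvPolynomial

section LexSegments

variable {K : Type*} [Field K] {n : ℕ} (w : Fin n → ℕ)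

theorem lexSegComponent_ideal_span_monomial_image {T : Set (Fin n →₀ ℕ)} {i : ℕ}
    (hup : ∀ χ ν, monomial χ (1 : K) ∈ Ideal.span ((fun τ => monomial τ (1 : K)) '' T) →
      weight w χ = i → weight w ν = i → LexLT χ ν →
      monomial ν (1 : K) ∈ Ideal.span ((fun τ => monomial τ (1 : K)) '' T)) :
    LexSegComponent w (Ideal.span ((fun τ => monomial τ (1 : K)) '' T)) i := by
  refine ⟨{χ | weight w χ = i ∧ monomial χ (1 : K) ∈ Ideal.span ((fun τ => monomial τ 1) '' T)},
    fun _ h => h.1, fun χ hχ ν hν hlt => ⟨hν, hup χ ν hχ.2 hχ.1 hν hlt⟩, fun f => ?_⟩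
  rw [← restrictSupport_eq_span, mem_restrictSupport_iff,
    mem_ideal_span_monomial_image_iff_monomial_mem]
  refine ⟨fun ⟨hf, hfi⟩ χ hχ => ⟨hfi (MvPolynomial.mem_support_iff.mp hχ), hf χ hχ⟩,
    fun h => ⟨fun χ hχ => (h hχ).2, fun χ hχ => (h (MvPolynomial.mem_support_iff.mpr hχ)).1⟩⟩

variable {w}

theorem LexSegComponent.monomial_mem_of_lexLT {I : Ideal (MvPolynomial (Fin n) K)} {i : ℕ}
    (h : LexSegComponent w I i) {χ ν : Fin n →₀ ℕ} (hχ : monomial χ (1 : K) ∈ I)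
    (hχi : weight w χ = i) (hνi : weight w ν = i) (hlt : LexLT χ ν) :
    monomial ν (1 : K) ∈ I := by
  obtain ⟨L, -, hup, hspan⟩ := h
  have hmem : ∀ μ, monomial μ (1 : K) ∈ Submodule.span K ((fun μ => monomial μ 1) '' L) ↔
      μ ∈ L := fun μ => by
    rw [← restrictSupport_eq_span, monomial_mem_restrictSupport]
    simp
  have hχL := (hmem χ).mp ((hspan _).mp ⟨hχ, isWeightedHomogeneous_monomial _ _ _ hχi⟩)
  exact ((hspan _).mpr ((hmem ν).mpr (hup χ hχL ν hνi hlt))).1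

theorem eq_ideal_span_monomial_of_lexSegComponent {S : Set (MvPolynomial (Fin n) K)} {d : ℕ}
    (hS : ∀ f ∈ S, ∃ e ≤ d, f.IsWeightedHomogeneous w e)
    (hlex : ∀ e ≤ d, LexSegComponent w (Ideal.span S) e) :
    Ideal.span S = Ideal.span ((fun τ => monomial τ (1 : K)) ''
      {τ | monomial τ (1 : K) ∈ Ideal.span S ∧ weight w τ ≤ d}) := by
  refine le_antisymm (Ideal.span_le.mpr fun f hf => ?_)
    (Ideal.span_le.mpr fun _ ⟨τ, hτ, hτf⟩ => hτf ▸ hτ.1)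
  obtain ⟨e, he, hfe⟩ := hS f hf
  obtain ⟨L, hL, -, hspan⟩ := hlex e he
  have hfL := (hspan f).mp ⟨Ideal.subset_span hf, hfe⟩
  rw [← restrictSupport_eq_span, mem_restrictSupport_iff] at hfL
  refine mem_ideal_span_monomial_image.mpr fun χ hχ => ⟨χ, ⟨?_, hL χ (hfL hχ) ▸ he⟩, le_rfl⟩
  exact ((hspan _).mpr (Submodule.subset_span ⟨χ, hfL hχ, rfl⟩)).1

end LexSegments

theorem lex_ideal_from_finitely_many_components_general
    (K : Type*) [Field K]
    (n : ℕ) (w : Fin n → ℕ) (hpos : ∀ k, 0 < w k)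
    (G : ℕ)
    (hG : ∀ m : ℕ, G < m → ∀ h : ℕ, ∀ μ : Fin n →₀ ℕ,
      Finsupp.weight w μ = m + h * Finset.univ.lcm w →
      ∃ ν : Fin n →₀ ℕ, ν ≤ μ ∧ Finsupp.weight w ν = h * Finset.univ.lcm w)
    (I : Ideal (MvPolynomial (Fin n) K)) (d : ℕ)
    (hgen : ∃ S : Set (MvPolynomial (Fin n) K),
      (∀ f ∈ S, ∃ e ≤ d, f.IsWeightedHomogeneous w e) ∧ I = Ideal.span S)
    (hlex : ∀ i : ℕ, i ≤ d + Finset.univ.lcm w + G → LexSegComponent w I i) :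
    ∀ i : ℕ, LexSegComponent w I i := by
  obtain ⟨S, hS, rfl⟩ := hgen
  set q := Finset.univ.lcm w
  have hq : 0 < q := Nat.pos_of_ne_zero fun h => by
    obtain ⟨j, -, hj⟩ := Finset.lcm_eq_zero_iff.mp h
    exact (hpos j).ne' hj
  have hdvd : ∀ j, w j ∣ q := fun j => Finset.dvd_lcm (Finset.mem_univ j)
  have hsplit : SplitsOffMultiples w q G := fun β H hβ =>
    hG (weight w β - H * q) (by omega) H β (by omega)
  have hT := eq_ideal_span_monomial_of_lexSegComponent hS fun e he => hlex e (by omega)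
  intro i
  rw [hT]
  refine lexSegComponent_ideal_span_monomial_image w fun χ ν hχ hχi hνi hlt => ?_
  obtain ⟨τ, ⟨hτI, hτd⟩, hτχ⟩ := monomial_mem_ideal_span_monomial_image_iff.mp hχ
  obtain ⟨σ', ξ, hτσ', hξν, hwt, hξ, hlt'⟩ :=
    exists_lexLT_exchange hpos hq hdvd hsplit hτχ hlt (hχi.trans hνi.symm)
  rw [← hT]
  exact monomial_mem_of_le_s15 hξν ((hlex _ (by omega)).monomial_mem_of_lexLT
    (monomial_mem_of_le_s15 hτσ' hτI) hwt rfl hlt')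

/-- **Finitely many lexsegment components suffice.**
Let `R` be a weighted polynomial ring over an infinite field of characteristic `0` with
positive weights listed in increasing order, `q` the lcm of the weights, and `G` a bound
such that every monomial of weighted degree `m + h·q` with `m > G` is divisible by a
monomial of weighted degree `h·q` (the invariant `G(w)`).  If `I` is a homogeneous ideal
generated in degrees `≤ d` whose components of degree `i ≤ d + q + G` are all spanned by
lexsegments, then `I` is a lexicographic ideal, i.e. all of its components are spanned by
lexsegments. -/
theorem lex_ideal_from_finitely_many_components
    (K : Type*) [Field K] [CharZero K]
    (n : ℕ) (w : Fin n → ℕ) (hpos : ∀ k, 0 < w k) (hmono : Monotone w)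
    (G : ℕ)
    (hG : ∀ m : ℕ, G < m → ∀ h : ℕ, ∀ μ : Fin n →₀ ℕ,
      Finsupp.weight w μ = m + h * Finset.univ.lcm w →
      ∃ ν : Fin n →₀ ℕ, ν ≤ μ ∧ Finsupp.weight w ν = h * Finset.univ.lcm w)
    (I : Ideal (MvPolynomial (Fin n) K)) (d : ℕ)
    (hgen : ∃ S : Set (MvPolynomial (Fin n) K),
      (∀ f ∈ S, ∃ e ≤ d, f.IsWeightedHomogeneous w e) ∧ I = Ideal.span S)
    (hlex : ∀ i : ℕ, i ≤ d + Finset.univ.lcm w + G → LexSegComponent w I i) :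
    ∀ i : ℕ, LexSegComponent w I i :=
  lex_ideal_from_finitely_many_components_general K n w hpos G hG I d hgen hlex
end

section
/- Let (R,w) = (K[X,Y],(q_1,q_2)) with q_1 < q_2 coprime, and let L be a lexsegment of weighted degree d. Then: (i) if q_1 ∣ d, the shadow Shad_i(L) is a lexsegment for every i; (ii) if q_1 ∤ d, letting δ be the smallest integer of the form d + βq_2 (β ∈ ℕ) divisible by q_1, the set {X^{δ/q_1}} ⊔ Shad_{δ−d}(L) is a lexsegment of degree δ. -/
open MvPolynomial

/-- `L` is a lexsegment of weighted degree `d`: all its elements have weighted degree `d`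
and it is closed under passing to lexicographically larger monomials of degree `d`. -/
def IsLexSeg {n : ℕ} (w : Fin n → ℕ) (L : Set (Fin n →₀ ℕ)) (d : ℕ) : Prop :=
  (∀ μ ∈ L, Finsupp.weight w μ = d) ∧
  (∀ μ ∈ L, ∀ ν : Fin n →₀ ℕ, Finsupp.weight w ν = d → LexLT μ ν → ν ∈ L)

/-- The `i`-th shadow of a set `A` of monomials: all products of a monomial of `A` by a
monomial of weighted degree `i`. -/
def Shad {n : ℕ} (w : Fin n → ℕ) (i : ℕ) (A : Set (Fin n →₀ ℕ)) : Set (Fin n →₀ ℕ) :=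
  {τ | ∃ μ ∈ A, ∃ ν : Fin n →₀ ℕ, Finsupp.weight w ν = i ∧ τ = μ + ν}

private lemma wt2 (q₁ q₂ : ℕ) (μ : Fin 2 →₀ ℕ) :
    Finsupp.weight ![q₁, q₂] μ = μ 0 * q₁ + μ 1 * q₂ := by
  rw [Finsupp.weight_apply, Finsupp.sum_fintype]
  · simp [Fin.sum_univ_two]
  · intro i; simp

private noncomputable def pr (a b : ℕ) : Fin 2 →₀ ℕ :=
  Finsupp.single 0 a + Finsupp.single 1 b

private lemma pr_zero (a b : ℕ) : pr a b 0 = a := by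
  simp [pr, Finsupp.single_apply]

private lemma pr_one (a b : ℕ) : pr a b 1 = b := by
  simp [pr, Finsupp.single_apply]

private lemma eq_pr (μ : Fin 2 →₀ ℕ) : μ = pr (μ 0) (μ 1) := by
  ext k
  obtain ⟨kv, hkv⟩ := k
  interval_cases kv
  · exact (pr_zero _ _).symm
  · exact (pr_one _ _).symm

private lemma pr_add (a b c e : ℕ) : pr a b + pr c e = pr (a + c) (b + e) := by
  simp only [pr, Finsupp.single_add]
  abel

private lemma pr_single (a : ℕ) : pr a 0 = Finsupp.single 0 a := by
  simp [pr]

private lemma lexlt_of {μ ν : Fin 2 →₀ ℕ} (h : μ 0 < ν 0) : LexLT μ ν :=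
  ⟨0, h, fun s hs => absurd hs (Fin.not_lt_zero s)⟩

private lemma lexlt_zero_lt {q₁ q₂ D : ℕ} (hq₂ : 0 < q₂) {μ ν : Fin 2 →₀ ℕ}
    (hμ : μ 0 * q₁ + μ 1 * q₂ = D) (hν : ν 0 * q₁ + ν 1 * q₂ = D)
    (h : LexLT μ ν) : μ 0 < ν 0 := by
  obtain ⟨k, hk, hs⟩ := h
  fin_cases k
  · exact hk
  · exfalso
    have h0 : μ 0 = ν 0 := hs 0 (by decide)
    rw [h0] at hμ
    have h1 : μ 1 * q₂ = ν 1 * q₂ := Nat.add_left_cancel (hμ.trans hν.symm)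
    have h2 : μ 1 = ν 1 := Nat.eq_of_mul_eq_mul_right hq₂ h1
    exact absurd h2 (Nat.ne_of_lt hk)

/-- **Shadows of lexsegments in two variables with coprime weights.**
Let `R = K[X,Y]` with `deg X = q₁ < deg Y = q₂`, `q₁, q₂` coprime, and let `L` be a
lexsegment of weighted degree `d`.  (i) If `q₁ ∣ d` then every shadow `Shad_i(L)` is a
lexsegment.  (ii) If `q₁ ∤ d`, let `δ = d + β·q₂` be the smallest integer of this form
divisible by `q₁`; then `{X^{δ/q₁}} ∪ Shad_{δ-d}(L)` is a lexsegment of degree `δ`. -/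
theorem shadows_of_lexsegments_two_variables
    (K : Type*) [Field K] [CharZero K]
    (q₁ q₂ : ℕ) (h0 : 0 < q₁) (hlt : q₁ < q₂) (hcop : Nat.Coprime q₁ q₂)
    (L : Set (Fin 2 →₀ ℕ)) (d : ℕ) (hL : IsLexSeg ![q₁, q₂] L d) :
    -- (i)
    (q₁ ∣ d → ∀ i : ℕ, IsLexSeg ![q₁, q₂] (Shad ![q₁, q₂] i L) (d + i))
    ∧
    -- (ii)
    (∀ β δ : ℕ, ¬ q₁ ∣ d → δ = d + β * q₂ → q₁ ∣ δ →
      (∀ β' : ℕ, β' < β → ¬ q₁ ∣ (d + β' * q₂)) →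
      IsLexSeg ![q₁, q₂]
        ({Finsupp.single 0 (δ / q₁)} ∪ Shad ![q₁, q₂] (δ - d) L) δ) := by
  have hq₂ : 0 < q₂ := lt_trans h0 hlt
  constructor
  · -- Part (i)
    intro hq₁d i
    constructor
    · rintro τ ⟨μ, hμL, ρ, hρw, rfl⟩
      rw [map_add, hL.1 μ hμL, hρw]
    · rintro τ ⟨μ, hμL, ρ, hρw, rfl⟩ σ hσw hlex
      have hd := hL.1 μ hμL
      have hτw : Finsupp.weight ![q₁, q₂] (μ + ρ) = d + i := by
        rw [map_add, hd, hρw]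
      rw [wt2] at hd hρw hσw hτw
      rw [Finsupp.add_apply, Finsupp.add_apply] at hτw
      set a := μ 0 with ha
      set b := μ 1 with hb
      set r0 := ρ 0 with hr0
      set r1 := ρ 1 with hr1
      set s := σ 0 with hsdef
      set t := σ 1 with htdef
      have hslt : a + r0 < s := by
        have := lexlt_zero_lt hq₂ hτw hσw hlex
        simpa [Finsupp.add_apply] using this
      have hq₁b : q₁ ∣ b := by
        have h1 : q₁ ∣ b * q₂ :=
          (Nat.dvd_add_right (dvd_mul_left q₁ a)).mp
            (show q₁ ∣ a * q₁ + b * q₂ by rw [hd]; exact hq₁d)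
        exact hcop.dvd_of_dvd_mul_right h1
      by_cases hbt : b ≤ t
      · -- case t ≥ b : σ = μ + (σ - μ)
        obtain ⟨x, hx⟩ : ∃ x, s = a + x := ⟨s - a, by omega⟩
        obtain ⟨y, hy⟩ : ∃ y, t = b + y := ⟨t - b, by omega⟩
        refine ⟨μ, hμL, pr x y, ?_, ?_⟩
        · rw [wt2, pr_zero, pr_one]
          rw [hx, hy] at hσw
          linarith
        · rw [eq_pr μ, ← ha, ← hb, pr_add, ← hx, ← hy]
          exact eq_pr σ
      · -- case t < b
        push_neg at hbt
        obtain ⟨B, hB⟩ := hq₁b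
        set B' := t / q₁ with hB'def
        set c := t % q₁ with hcdef
        have htc : q₁ * B' + c = t := Nat.div_add_mod t q₁
        have hB'B : B' < B := by
          have h2 : q₁ * B' < q₁ * B := by omega
          exact Nat.lt_of_mul_lt_mul_left h2
        obtain ⟨g, hgB, hg1⟩ : ∃ g, B = B' + g ∧ 1 ≤ g := ⟨B - B', by omega, by omega⟩
        -- derive c ≤ r1
        obtain ⟨e, he⟩ : ∃ e, s = a + r0 + e := ⟨s - (a + r0), by omega⟩
        rw [he] at hσw
        rw [hB] at hd
        have hef : e * q₁ + t * q₂ = (q₁ * B + r1) * q₂ := by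
          have h5 : (a + r0 + e) * q₁ = a * q₁ + r0 * q₁ + e * q₁ := by ring
          have h6 : (q₁ * B + r1) * q₂ = q₁ * B * q₂ + r1 * q₂ := by ring
          linarith
        have htle : t ≤ q₁ * B + r1 := by
          by_contra hc
          push_neg at hc
          have h7 : (q₁ * B + r1 + 1) * q₂ ≤ t * q₂ := Nat.mul_le_mul_right q₂ hc
          have h8 : (q₁ * B + r1 + 1) * q₂ = (q₁ * B + r1) * q₂ + q₂ := by ring
          linarith
        obtain ⟨f, hf⟩ : ∃ f, q₁ * B + r1 = t + f := ⟨q₁ * B + r1 - t, by omega⟩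
        have heq : e * q₁ = f * q₂ := by
          have h9 : (t + f) * q₂ = t * q₂ + f * q₂ := by ring
          rw [hf] at hef
          linarith
        have hq₁f : q₁ ∣ f := by
          have h10 : q₁ ∣ f * q₂ := ⟨e, by linarith⟩
          exact hcop.dvd_of_dvd_mul_right h10
        obtain ⟨F, hF⟩ := hq₁f
        have hmod : c = r1 % q₁ := by
          have h1 : (t + q₁ * F) % q₁ = t % q₁ := Nat.add_mul_mod_self_left t q₁ F
          have h2 : (q₁ * B + r1) % q₁ = r1 % q₁ := Nat.mul_add_mod q₁ B r1
          have h3 : t + q₁ * F = q₁ * B + r1 := by rw [hf, hF]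
          rw [hcdef, ← h1, h3, h2]
        have hcr1 : c ≤ r1 := by rw [hmod]; exact Nat.mod_le r1 q₁
        obtain ⟨a', ha'⟩ : ∃ a', a' = a + g * q₂ := ⟨_, rfl⟩
        have hμ'w : a' * q₁ + q₁ * B' * q₂ = d := by
          rw [ha', ← hd, hgB]; ring
        have hμ'L : pr a' (q₁ * B') ∈ L := by
          apply hL.2 μ hμL
          · rw [wt2, pr_zero, pr_one]; exact hμ'w
          · apply lexlt_of
            rw [pr_zero]
            have : 0 < g * q₂ := Nat.mul_pos hg1 hq₂
            rw [← ha]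
            linarith
        have hile : c * q₂ ≤ i := by
          have h4 : c * q₂ ≤ r1 * q₂ := Nat.mul_le_mul_right q₂ hcr1
          linarith [Nat.zero_le (r0 * q₁)]
        have h5t : t * q₂ = q₁ * B' * q₂ + c * q₂ := by rw [← htc]; ring
        have hsge : a' * q₁ ≤ s * q₁ := by
          have h5s : s * q₁ = (a + r0 + e) * q₁ := by rw [he]
          have h5e : (a + r0 + e) * q₁ = a * q₁ + r0 * q₁ + e * q₁ := by ring
          linarith
        have hs' : a' ≤ s := Nat.le_of_mul_le_mul_right hsge h0
        obtain ⟨x, hx⟩ : ∃ x, s = a' + x := ⟨s - a', by omega⟩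
        refine ⟨pr a' (q₁ * B'), hμ'L, pr x c, ?_, ?_⟩
        · rw [wt2, pr_zero, pr_one]
          have h11 : (a + r0 + e) * q₁ = a * q₁ + r0 * q₁ + e * q₁ := by ring
          have h12 : s * q₁ = a' * q₁ + x * q₁ := by rw [hx]; ring
          have h13 : s * q₁ = (a + r0 + e) * q₁ := by rw [he]
          linarith
        · rw [pr_add, ← hx, htc]
          exact eq_pr σ
  · -- Part (ii)
    intro β δ hnd hδ hq₁δ hmin
    have hdδ : d ≤ δ := Nat.le.intro hδ.symm
    have hδd : δ - d = β * q₂ := by rw [hδ]; exact Nat.add_sub_cancel_left d (β * q₂)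
    have hβ1 : 1 ≤ β := by
      rcases Nat.eq_zero_or_pos β with h | h
      · exfalso; apply hnd
        rw [h] at hδ; simp at hδ; rwa [← hδ]
      · exact h
    have hβq₁ : β < q₁ := by
      by_contra hc
      push_neg at hc
      obtain ⟨γ, hγ⟩ : ∃ γ, β = q₁ + γ := ⟨β - q₁, by omega⟩
      have h1 : d + γ * q₂ + q₁ * q₂ = δ := by rw [hδ, hγ]; ring
      have h3 : q₁ ∣ d + γ * q₂ + q₁ * q₂ := by rw [h1]; exact hq₁δ
      have h2 : q₁ ∣ d + γ * q₂ := by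
        have h4 := Nat.dvd_sub h3 (dvd_mul_right q₁ q₂)
        rwa [Nat.add_sub_cancel] at h4
      exact hmin γ (by omega) h2
    have hsingw : (Finsupp.single (0 : Fin 2) (δ / q₁)) 0 * q₁
        + (Finsupp.single (0 : Fin 2) (δ / q₁)) 1 * q₂ = δ := by
      rw [Finsupp.single_eq_same, Finsupp.single_eq_of_ne (by decide)]
      simp [Nat.div_mul_cancel hq₁δ]
    constructor
    · rintro μS (hμ1 | ⟨μ, hμL, ρ, hρw, rfl⟩)
      · rw [Set.mem_singleton_iff] at hμ1
        subst hμ1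
        rw [wt2]
        exact hsingw
      · rw [map_add, hL.1 μ hμL, hρw]
        omega
    · rintro μS hμS ν hνw hlex
      rw [wt2] at hνw
      set s := ν 0 with hsdef
      set t := ν 1 with htdef
      rcases hμS with hμ1 | ⟨μ, hμL, ρ, hρw, rfl⟩
      · exfalso
        rw [Set.mem_singleton_iff] at hμ1
        subst hμ1
        have hgt := lexlt_zero_lt hq₂ hsingw hνw hlex
        rw [Finsupp.single_eq_same, ← hsdef] at hgt
        have h1 : δ / q₁ * q₁ = δ := Nat.div_mul_cancel hq₁δ
        have h2 : (δ / q₁ + 1) * q₁ ≤ s * q₁ := Nat.mul_le_mul_right q₁ hgt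
        have h3 : (δ / q₁ + 1) * q₁ = δ / q₁ * q₁ + q₁ := by ring
        linarith [Nat.zero_le (t * q₂)]
      · have hd := hL.1 μ hμL
        have hτw : Finsupp.weight ![q₁, q₂] (μ + ρ) = δ := by
          rw [map_add, hd, hρw]; omega
        rw [wt2] at hd hρw hτw
        rw [Finsupp.add_apply, Finsupp.add_apply] at hτw
        have hslt : μ 0 + ρ 0 < s := by
          have := lexlt_zero_lt hq₂ hτw hνw hlex
          simpa [Finsupp.add_apply] using this
        by_cases ht : t = 0
        · left
          rw [Set.mem_singleton_iff]
          have hsq : s * q₁ = δ := by rw [ht] at hνw; simpa using hνw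
          have hseq : s = δ / q₁ := by rw [← hsq, Nat.mul_div_cancel s h0]
          rw [eq_pr ν, ← hsdef, ← htdef, ht, hseq, pr_single]
        · right
          have hq₁t : q₁ ∣ t := by
            have h1 : q₁ ∣ t * q₂ :=
              (Nat.dvd_add_right (dvd_mul_left q₁ s)).mp
                (show q₁ ∣ s * q₁ + t * q₂ by rw [hνw]; exact hq₁δ)
            exact hcop.dvd_of_dvd_mul_right h1
          have htq : q₁ ≤ t := Nat.le_of_dvd (Nat.pos_of_ne_zero ht) hq₁t
          obtain ⟨y, hy⟩ : ∃ y, t = y + β := ⟨t - β, by omega⟩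
          refine ⟨pr s y, ?_, pr 0 β, ?_, ?_⟩
          · apply hL.2 μ hμL
            · rw [wt2, pr_zero, pr_one]
              rw [hy] at hνw
              have h6 : (y + β) * q₂ = y * q₂ + β * q₂ := by ring
              have h7 : δ = d + β * q₂ := hδ
              linarith
            · exact lexlt_of (by rw [pr_zero]; omega)
          · rw [wt2, pr_zero, pr_one, hδd]
            ring
          · rw [pr_add, ← hy]
            simpa using (eq_pr ν)
end

section
/- Let (R,w) = (K[X,Y],(q_1,q_2)) with q_1 < q_2 coprime, and let I be a monomial ideal minimally generated in degrees d_1 < d_2 < … < d_r such that the monomials of I_{d_i} form a lexsegment for every i = 1,…,r. Then I is a lexicographic ideal if and only if q_1 ∣ d_1, or q_1 ∤ d_1 and there exists 1 < s ≤ r such that q_1 ∣ d_s and d_s ≤ min{δ_i}, where for each generating degree d_i not divisible by q_1, δ_i denotes the smallest integer of the form d_i + βq_2 (β ∈ ℕ) divisible by q_1. -/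
open MvPolynomial

/-- `μ` is (the exponent of) a minimal monomial generator of the monomial ideal `I`. -/
def MinGen {K : Type*} [Field K] {n : ℕ} (I : Ideal (MvPolynomial (Fin n) K))
    (μ : Fin n →₀ ℕ) : Prop :=
  (monomial μ (1 : K) : MvPolynomial (Fin n) K) ∈ I ∧
    ∀ s ∈ μ.support,
      (monomial (μ - Finsupp.single s 1) (1 : K) : MvPolynomial (Fin n) K) ∉ I

/-- A monomial ideal is lexicographic if, in each weighted degree, its monomials form a
lexsegment. -/
def IsLexIdealMon {K : Type*} [Field K] {n : ℕ} (w : Fin n → ℕ)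
    (I : Ideal (MvPolynomial (Fin n) K)) : Prop :=
  ∀ e : ℕ, IsLexSeg w
    {μ | (monomial μ (1 : K) : MvPolynomial (Fin n) K) ∈ I ∧ Finsupp.weight w μ = e} e

/-!
Since `gcd(q₁, q₂) = 1`, two monomials of the same weighted degree differ by a multiple of
`(q₂, -q₁)`, and within one degree the lex order is the order of the `X`-exponents.

If `I` is lexicographic, multiplying a generator of degree `d_i` by `Y^β` lands in degree
`d_i + βq₂`; when `q₁` divides this degree, the lexsegment there contains `X^((d_i + βq₂)/q₁)`.
Hence the unique minimal generator `X^c` of `I` that is a power of `X` satisfies `c q₁ ≤ δ_i`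
for every `i`; its degree is some `d_s`, and `s ≠ 1` when `q₁ ∤ d_1`.

Conversely, the condition provides such an `X^c ∈ I`. Let `μ ∈ I`, let `ν` be lex-larger of the
same degree, so `ν = μ + t(q₂, -q₁)`, and let `γ ∣ μ` be a minimal generator. Sliding `γ` along
`(q₂, -q₁)` stays inside the lexsegment of its degree and reaches a divisor of `ν`, unless the
`Y`-exponent of `ν` is smaller than `γ_Y mod q₁`; then `q₁ ∤ deg γ`, and the `X`-exponent of `ν`
is at least `δ/q₁ ≥ c`, so `X^c ∣ ν`.
-/

section MonomialIdeal

variable {σ R : Type*} [CommSemiring R]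

theorem monomial_one_mem_of_le {I : Ideal (MvPolynomial σ R)} {μ ν : σ →₀ ℕ}
    (hμ : monomial μ (1 : R) ∈ I) (hle : μ ≤ ν) : monomial ν (1 : R) ∈ I := by
  have hν : monomial ν (1 : R) = monomial (ν - μ) 1 * monomial μ 1 := by
    rw [monomial_mul, tsub_add_cancel_of_le hle, one_mul]
  exact hν ▸ I.mul_mem_left _ hμ

end MonomialIdeal

section MinGen

variable {K : Type*} [Field K] {n : ℕ} {I : Ideal (MvPolynomial (Fin n) K)}

theorem exists_minGen_le {μ : Fin n →₀ ℕ} (hμ : monomial μ (1 : K) ∈ I) :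
    ∃ γ, MinGen I γ ∧ γ ≤ μ := by
  induction μ using WellFoundedLT.induction with
  | _ μ ih =>
    by_cases h : ∀ s ∈ μ.support, monomial (μ - Finsupp.single s 1) (1 : K) ∉ I
    · exact ⟨μ, ⟨hμ, h⟩, le_rfl⟩
    push Not at h
    obtain ⟨s, hs, hmem⟩ := h
    have hlt : μ - Finsupp.single s 1 < μ := by
      refine tsub_le_self.lt_of_ne fun heq => ?_
      have := DFunLike.congr_fun heq s
      simp only [Finsupp.tsub_apply, Finsupp.single_eq_same] at this
      exact Finsupp.mem_support_iff.1 hs (by omega)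
    obtain ⟨γ, hγ, hle⟩ := ih _ hlt hmem
    exact ⟨γ, hγ, hle.trans tsub_le_self⟩

theorem MinGen.eq_of_le {γ γ' : Fin n →₀ ℕ} (hγ' : MinGen I γ')
    (hγ : monomial γ (1 : K) ∈ I) (hle : γ ≤ γ') : γ = γ' := by
  by_contra hne
  obtain ⟨s, hs⟩ : ∃ s, γ s < γ' s := by
    by_contra! h
    exact hne (le_antisymm hle (Finsupp.le_def.2 h))
  refine hγ'.2 s (Finsupp.mem_support_iff.2 (by omega)) (monomial_one_mem_of_le hγ ?_)
  refine Finsupp.le_def.2 fun i => ?_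
  rw [Finsupp.tsub_apply, Finsupp.single_apply]
  split_ifs with h
  · subst h; omega
  · simpa using Finsupp.le_def.1 hle i

theorem MinGen.eq_of_single {i : Fin n} {c c' : ℕ} (hc : MinGen I (Finsupp.single i c))
    (hc' : MinGen I (Finsupp.single i c')) : c = c' := by
  rcases le_total c c' with hle | hle
  · exact Finsupp.single_injective i (hc'.eq_of_le hc.1 (Finsupp.single_le_single.2 hle))
  · exact (Finsupp.single_injective i (hc.eq_of_le hc'.1 (Finsupp.single_le_single.2 hle))).symm

end MinGen

section TwoVariables

variable {q₁ q₂ : ℕ}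

theorem weight_fin_two (μ : Fin 2 →₀ ℕ) :
    Finsupp.weight ![q₁, q₂] μ = μ 0 * q₁ + μ 1 * q₂ := by
  simp [Finsupp.weight_apply, Finsupp.sum_fintype]

theorem le_iff_fin_two {μ ν : Fin 2 →₀ ℕ} : μ ≤ ν ↔ μ 0 ≤ ν 0 ∧ μ 1 ≤ ν 1 := by
  rw [Finsupp.le_def, Fin.forall_fin_two]

theorem lexLT_of_apply_zero_lt {m : ℕ} {μ ν : Fin (m + 1) →₀ ℕ} (h : μ 0 < ν 0) : LexLT μ ν :=
  ⟨0, h, fun s hs => absurd hs (Fin.not_lt_zero s)⟩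

theorem LexLT.apply_zero_lt (hq₂ : 0 < q₂) {μ ν : Fin 2 →₀ ℕ}
    (hw : Finsupp.weight ![q₁, q₂] μ = Finsupp.weight ![q₁, q₂] ν) (h : LexLT μ ν) :
    μ 0 < ν 0 := by
  obtain ⟨k, hk, hprev⟩ := h
  rw [weight_fin_two, weight_fin_two] at hw
  match k with
  | 0 => exact hk
  | 1 =>
    have h0 : μ 0 = ν 0 := hprev 0 (by decide)
    have : μ 1 * q₂ < ν 1 * q₂ := Nat.mul_lt_mul_of_pos_right hk hq₂
    rw [h0] at hw
    omega

theorem IsLexSeg.mem_of_apply_zero_le {L : Set (Fin 2 →₀ ℕ)} {e : ℕ}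
    (hL : IsLexSeg ![q₁, q₂] L e) (hq₂ : 0 < q₂) {γ τ : Fin 2 →₀ ℕ} (hγ : γ ∈ L)
    (hτ : Finsupp.weight ![q₁, q₂] τ = e) (hle : γ 0 ≤ τ 0) : τ ∈ L := by
  rcases hle.lt_or_eq with hlt | heq
  · exact hL.2 γ hγ τ hτ (lexLT_of_apply_zero_lt hlt)
  · have hw := (hL.1 γ hγ).trans hτ.symm
    rw [weight_fin_two, weight_fin_two, heq] at hw
    have h1 : γ 1 = τ 1 := Nat.eq_of_mul_eq_mul_right hq₂ (by omega)
    convert hγ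
    exact (Finsupp.ext (Fin.forall_fin_two.2 ⟨heq, h1⟩)).symm

theorem IsLexSeg.single_mem {L : Set (Fin 2 →₀ ℕ)} {e : ℕ} (hL : IsLexSeg ![q₁, q₂] L e)
    (hq₁ : 0 < q₁) (hq₂ : 0 < q₂) (hdvd : q₁ ∣ e) {μ : Fin 2 →₀ ℕ} (hμ : μ ∈ L) :
    Finsupp.single 0 (e / q₁) ∈ L := by
  have hw := hL.1 μ hμ
  rw [weight_fin_two] at hw
  refine hL.mem_of_apply_zero_le hq₂ hμ ?_ ?_
  · simp [weight_fin_two, Nat.div_mul_cancel hdvd]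
  · simpa using (Nat.le_div_iff_mul_le hq₁).2 (by omega)

theorem dvd_weight_add_mul (hq₁ : 0 < q₁) (μ : Fin 2 →₀ ℕ) :
    q₁ ∣ Finsupp.weight ![q₁, q₂] μ + (q₁ - 1) * μ 1 * q₂ := by
  obtain ⟨p, rfl⟩ := Nat.exists_eq_add_of_lt hq₁
  exact ⟨μ 0 + μ 1 * q₂, by rw [weight_fin_two]; simp only [zero_add, add_tsub_cancel_right]; ring⟩

theorem exists_eq_add_mul_of_weight_eq (hq₂ : 0 < q₂) (hcop : q₁.Coprime q₂)
    {μ ν : Fin 2 →₀ ℕ} (hw : Finsupp.weight ![q₁, q₂] μ = Finsupp.weight ![q₁, q₂] ν)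
    (hle : μ 0 ≤ ν 0) : ∃ t, ν 0 = μ 0 + t * q₂ ∧ μ 1 = ν 1 + t * q₁ := by
  rw [weight_fin_two, weight_fin_two] at hw
  obtain ⟨u, hu⟩ := Nat.exists_eq_add_of_le hle
  have h1 : ν 1 ≤ μ 1 := by
    by_contra! h
    have := Nat.mul_lt_mul_of_pos_right h hq₂
    have := Nat.mul_le_mul_right q₁ hle
    omega
  obtain ⟨v, hv⟩ := Nat.exists_eq_add_of_le h1
  have huv : u * q₁ = v * q₂ := by
    rw [hu, hv] at hw
    linarith
  obtain ⟨t, rfl⟩ : q₂ ∣ u := hcop.symm.dvd_of_dvd_mul_right ⟨v, by rw [huv, mul_comm]⟩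
  have hvt : v = t * q₁ := Nat.eq_of_mul_eq_mul_right hq₂ (by rw [← huv]; ring)
  exact ⟨t, by rw [hu, mul_comm q₂], by rw [hv, hvt]⟩

theorem exists_shift_le_of_mod_le {γ μ ν : Fin 2 →₀ ℕ} {t : ℕ}
    (hγμ : γ ≤ μ) (ht0 : ν 0 = μ 0 + t * q₂) (ht1 : μ 1 = ν 1 + t * q₁)
    (hmod : γ 1 % q₁ ≤ ν 1) :
    ∃ τ, Finsupp.weight ![q₁, q₂] τ = Finsupp.weight ![q₁, q₂] γ ∧ γ 0 ≤ τ 0 ∧ τ ≤ ν := by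
  obtain ⟨hγ0, hγ1⟩ := le_iff_fin_two.1 hγμ
  have hdiv := Nat.div_add_mod (γ 1) q₁
  set g := γ 1 / q₁
  set ρ := γ 1 % q₁
  -- `τ = γ + m • (q₂, -q₁)` with `m = min t g`
  obtain ⟨m, hmt, hmγ, hmν⟩ : ∃ m, m ≤ t ∧ m * q₁ ≤ γ 1 ∧ γ 1 - m * q₁ ≤ ν 1 := by
    rcases le_total t g with h | h
    · have := Nat.mul_le_mul_right q₁ h
      exact ⟨t, le_rfl, by linarith, by omega⟩
    · exact ⟨g, h, by linarith, by rw [mul_comm] at hdiv; omega⟩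
  refine ⟨Finsupp.single 0 (γ 0 + m * q₂) + Finsupp.single 1 (γ 1 - m * q₁), ?_, by simp, ?_⟩
  · obtain ⟨k, hk⟩ := Nat.exists_eq_add_of_le hmγ
    simp only [weight_fin_two, Finsupp.add_apply, Finsupp.single_apply, ↓reduceIte,
      one_ne_zero, zero_ne_one, add_zero, zero_add, hk, add_tsub_cancel_left]
    ring
  · have := Nat.mul_le_mul_right q₂ hmt
    simp only [le_iff_fin_two, Finsupp.add_apply, Finsupp.single_apply, ↓reduceIte,
      one_ne_zero, zero_ne_one, add_zero, zero_add, tsub_le_iff_right]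
    omega

theorem exists_dvd_le_of_lt_mod (hq₁ : 0 < q₁) (hcop : q₁.Coprime q₂)
    {γ μ ν : Fin 2 →₀ ℕ} {t : ℕ} (hγμ : γ ≤ μ) (ht0 : ν 0 = μ 0 + t * q₂)
    (ht1 : μ 1 = ν 1 + t * q₁) (hmod : ν 1 < γ 1 % q₁) :
    ¬ q₁ ∣ Finsupp.weight ![q₁, q₂] γ ∧ ∃ β, q₁ ∣ Finsupp.weight ![q₁, q₂] γ + β * q₂ ∧
      Finsupp.weight ![q₁, q₂] γ + β * q₂ ≤ ν 0 * q₁ := by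
  obtain ⟨hγ0, hγ1⟩ := le_iff_fin_two.1 hγμ
  have hdiv := Nat.div_add_mod (γ 1) q₁
  set g := γ 1 / q₁
  set ρ := γ 1 % q₁
  have hgt : g < t := Nat.lt_of_mul_lt_mul_left (a := q₁) (by linarith)
  have hδ : Finsupp.weight ![q₁, q₂] γ + (q₁ - ρ) * q₂ = q₁ * (γ 0 + (g + 1) * q₂) := by
    have : ρ < q₁ := Nat.mod_lt _ hq₁
    rw [weight_fin_two, ← hdiv, Nat.sub_mul]
    zify [Nat.mul_le_mul_right q₂ this.le]
    ring
  refine ⟨fun h => ?_, q₁ - ρ, hδ ▸ dvd_mul_right _ _, ?_⟩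
  · have : q₁ ∣ γ 1 := by
      rw [weight_fin_two] at h
      exact hcop.dvd_of_dvd_mul_right ((Nat.dvd_add_right (dvd_mul_left q₁ (γ 0))).1 h)
    simp [ρ, Nat.mod_eq_zero_of_dvd this] at hmod
  · have := Nat.mul_le_mul_right q₂ hgt
    rw [hδ, ht0]
    nlinarith

theorem exists_le_or_dvd_le_of_weight_eq (hq₁ : 0 < q₁) (hq₂ : 0 < q₂)
    (hcop : q₁.Coprime q₂) {γ μ ν : Fin 2 →₀ ℕ} (hγμ : γ ≤ μ)
    (hw : Finsupp.weight ![q₁, q₂] μ = Finsupp.weight ![q₁, q₂] ν) (hle : μ 0 ≤ ν 0) :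
    (∃ τ, Finsupp.weight ![q₁, q₂] τ = Finsupp.weight ![q₁, q₂] γ ∧ γ 0 ≤ τ 0 ∧ τ ≤ ν) ∨
      (¬ q₁ ∣ Finsupp.weight ![q₁, q₂] γ ∧ ∃ β, q₁ ∣ Finsupp.weight ![q₁, q₂] γ + β * q₂ ∧
        Finsupp.weight ![q₁, q₂] γ + β * q₂ ≤ ν 0 * q₁) := by
  obtain ⟨t, ht0, ht1⟩ := exists_eq_add_mul_of_weight_eq hq₂ hcop hw hle
  rcases le_or_gt (γ 1 % q₁) (ν 1) with hmod | hmod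
  · exact .inl (exists_shift_le_of_mod_le hγμ ht0 ht1 hmod)
  · exact .inr (exists_dvd_le_of_lt_mod hq₁ hcop hγμ ht0 ht1 hmod)

end TwoVariables

section LexIdeal

variable {K : Type*} [Field K] {q₁ q₂ : ℕ} {I : Ideal (MvPolynomial (Fin 2) K)}

theorem IsLexIdealMon.exists_minGen_single_le (hI : IsLexIdealMon ![q₁, q₂] I)
    (hq₁ : 0 < q₁) (hq₂ : 0 < q₂) {μ : Fin 2 →₀ ℕ} (hμ : monomial μ (1 : K) ∈ I) {β : ℕ}
    (hdvd : q₁ ∣ Finsupp.weight ![q₁, q₂] μ + β * q₂) :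
    ∃ c, MinGen I (Finsupp.single 0 c) ∧ c * q₁ ≤ Finsupp.weight ![q₁, q₂] μ + β * q₂ := by
  set e := Finsupp.weight ![q₁, q₂] μ + β * q₂
  have hμβ : monomial (μ + Finsupp.single 1 β) (1 : K) ∈ I :=
    monomial_one_mem_of_le hμ le_self_add
  have hwβ : Finsupp.weight ![q₁, q₂] (μ + Finsupp.single 1 β) = e := by
    simp [e, weight_fin_two, add_mul, add_assoc]
  obtain ⟨γ, hγ, hle⟩ := exists_minGen_le ((hI e).single_mem hq₁ hq₂ hdvd ⟨hμβ, hwβ⟩).1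
  obtain ⟨h0, h1⟩ := le_iff_fin_two.1 hle
  have hγ' : γ = Finsupp.single 0 (γ 0) :=
    Finsupp.ext (Fin.forall_fin_two.2 ⟨by simp, by simpa using h1⟩)
  refine ⟨γ 0, hγ' ▸ hγ, ?_⟩
  calc γ 0 * q₁ ≤ e / q₁ * q₁ := Nat.mul_le_mul_right _ (by simpa using h0)
    _ = e := Nat.div_mul_cancel hdvd

theorem IsLexIdealMon.exists_minGen_single_le_sInf (hI : IsLexIdealMon ![q₁, q₂] I)
    (hq₁ : 0 < q₁) (hq₂ : 0 < q₂) {μ : Fin 2 →₀ ℕ} (hμ : monomial μ (1 : K) ∈ I) :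
    ∃ c, MinGen I (Finsupp.single 0 c) ∧
      c * q₁ ≤ sInf {e : ℕ | q₁ ∣ e ∧ ∃ β : ℕ, e = Finsupp.weight ![q₁, q₂] μ + β * q₂} := by
  have hne : {e : ℕ | q₁ ∣ e ∧ ∃ β : ℕ, e = Finsupp.weight ![q₁, q₂] μ + β * q₂}.Nonempty :=
    ⟨_, dvd_weight_add_mul hq₁ μ, _, rfl⟩
  obtain ⟨hdvd, β, hβ⟩ := Nat.sInf_mem hne
  rw [hβ] at hdvd ⊢
  exact hI.exists_minGen_single_le hq₁ hq₂ hμ hdvd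

theorem IsLexIdealMon.exists_dvd_le_sInf (hI : IsLexIdealMon ![q₁, q₂] I)
    (hq₁ : 0 < q₁) (hq₂ : 0 < q₂) {r : ℕ} {d : Fin r → ℕ}
    (hdegs : ∀ μ : Fin 2 →₀ ℕ, MinGen I μ → ∃ i, Finsupp.weight ![q₁, q₂] μ = d i)
    (hocc : ∀ i : Fin r, ∃ μ : Fin 2 →₀ ℕ, MinGen I μ ∧ Finsupp.weight ![q₁, q₂] μ = d i)
    (i₀ : Fin r) :
    ∃ s, q₁ ∣ d s ∧ ∀ i, d s ≤ sInf {e : ℕ | q₁ ∣ e ∧ ∃ β : ℕ, e = d i + β * q₂} := by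
  obtain ⟨μ₀, hμ₀, -⟩ := hocc i₀
  obtain ⟨c, hc, -⟩ := hI.exists_minGen_single_le_sInf hq₁ hq₂ hμ₀.1
  obtain ⟨s, hs⟩ := hdegs _ hc
  have hds : d s = c * q₁ := by simp [← hs, weight_fin_two]
  refine ⟨s, hds ▸ dvd_mul_left _ _, fun i => ?_⟩
  obtain ⟨μ, hμ, hμw⟩ := hocc i
  obtain ⟨c', hc', hle⟩ := hI.exists_minGen_single_le_sInf hq₁ hq₂ hμ.1
  rwa [hds, ← hμw, hc.eq_of_single hc']

theorem isLexIdealMon_of_single_mem (hq₁ : 0 < q₁) (hq₂ : 0 < q₂) (hcop : q₁.Coprime q₂)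
    (hgen : ∀ γ, MinGen I γ →
      IsLexSeg ![q₁, q₂]
        {μ | monomial μ (1 : K) ∈ I ∧ Finsupp.weight ![q₁, q₂] μ = Finsupp.weight ![q₁, q₂] γ}
        (Finsupp.weight ![q₁, q₂] γ))
    {c : ℕ} (hc : monomial (Finsupp.single 0 c) (1 : K) ∈ I)
    (hcle : ∀ γ, MinGen I γ → ¬ q₁ ∣ Finsupp.weight ![q₁, q₂] γ → ∀ β,
      q₁ ∣ Finsupp.weight ![q₁, q₂] γ + β * q₂ → c * q₁ ≤ Finsupp.weight ![q₁, q₂] γ + β * q₂) :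
    IsLexIdealMon ![q₁, q₂] I := by
  refine fun e => ⟨fun μ hμ => hμ.2, ?_⟩
  rintro μ ⟨hμ, hμw⟩ ν hνw hlex
  refine ⟨?_, hνw⟩
  obtain ⟨γ, hγ, hγμ⟩ := exists_minGen_le hμ
  have hw := hμw.trans hνw.symm
  rcases exists_le_or_dvd_le_of_weight_eq hq₁ hq₂ hcop hγμ hw (hlex.apply_zero_lt hq₂ hw).le with
    ⟨τ, hτw, hτ0, hτν⟩ | ⟨hndvd, β, hdvd, hle⟩
  · exact monomial_one_mem_of_le ((hgen γ hγ).mem_of_apply_zero_le hq₂ ⟨hγ.1, rfl⟩ hτw hτ0).1 hτν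
  · refine monomial_one_mem_of_le hc (Finsupp.single_le_iff.2 ?_)
    exact Nat.le_of_mul_le_mul_right ((hcle γ hγ hndvd β hdvd).trans hle) hq₁

end LexIdeal

theorem lex_ideal_characterization_two_variables_general
    (K : Type*) [Field K]
    (q₁ q₂ : ℕ) (h0 : 0 < q₁) (hlt : q₁ < q₂) (hcop : Nat.Coprime q₁ q₂)
    (I : Ideal (MvPolynomial (Fin 2) K))
    (r : ℕ) (hr : 0 < r) (d : Fin r → ℕ) (hd : StrictMono d)
    (hdegs : ∀ μ : Fin 2 →₀ ℕ, MinGen I μ → ∃ i, Finsupp.weight ![q₁, q₂] μ = d i)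
    (hocc : ∀ i : Fin r, ∃ μ : Fin 2 →₀ ℕ, MinGen I μ ∧ Finsupp.weight ![q₁, q₂] μ = d i)
    (hlexcomp : ∀ i : Fin r,
      IsLexSeg ![q₁, q₂]
        {μ | (monomial μ (1 : K) : MvPolynomial (Fin 2) K) ∈ I ∧
          Finsupp.weight ![q₁, q₂] μ = d i} (d i)) :
    IsLexIdealMon ![q₁, q₂] I ↔
      (q₁ ∣ d ⟨0, hr⟩ ∨
        (¬ q₁ ∣ d ⟨0, hr⟩ ∧
          ∃ s : Fin r, ⟨0, hr⟩ < s ∧ q₁ ∣ d s ∧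
            ∀ i : Fin r, ¬ q₁ ∣ d i →
              d s ≤ sInf {e : ℕ | q₁ ∣ e ∧ ∃ β : ℕ, e = d i + β * q₂})) := by
  have hq₂ : 0 < q₂ := h0.trans hlt
  constructor
  · intro hI
    refine or_iff_not_imp_left.2 fun hd0 => ⟨hd0, ?_⟩
    obtain ⟨s, hs, hsle⟩ := hI.exists_dvd_le_sInf h0 hq₂ hdegs hocc ⟨0, hr⟩
    refine ⟨s, (Fin.le_def.2 (Nat.zero_le _)).lt_of_ne ?_, hs, fun i _ => hsle i⟩
    rintro rfl
    exact hd0 hs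
  · intro h
    obtain ⟨s, hs, hsle⟩ : ∃ s, q₁ ∣ d s ∧
        ∀ i, ¬ q₁ ∣ d i → ∀ β, q₁ ∣ d i + β * q₂ → d s ≤ d i + β * q₂ := by
      rcases h with hd0 | ⟨-, s, -, hs, hsle⟩
      · exact ⟨_, hd0, fun i _ β _ =>
          (hd.monotone (Fin.le_def.2 (Nat.zero_le _))).trans le_self_add⟩
      · exact ⟨s, hs, fun i hi β hβ => (hsle i hi).trans (Nat.sInf_le ⟨hβ, β, rfl⟩)⟩
    obtain ⟨μ, hμ, hμw⟩ := hocc s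
    refine isLexIdealMon_of_single_mem h0 hq₂ hcop (fun γ hγ => ?_)
      ((hlexcomp s).single_mem h0 hq₂ hs ⟨hμ.1, hμw⟩).1 (fun γ hγ => ?_)
    all_goals obtain ⟨i, hi⟩ := hdegs γ hγ
    · exact hi ▸ hlexcomp i
    · rw [hi, Nat.div_mul_cancel hs]
      exact hsle i

/-- **Characterization of lexicographic ideals in two variables with coprime weights.**
Let `R = K[X,Y]` with coprime weights `q₁ < q₂` and let `I` be a monomial ideal minimally
generated in degrees `d 1 < … < d r`, such that the monomials of `I` of degree `d i` form
a lexsegment for each `i`.  Then `I` is a lexicographic ideal if and only if `q₁ ∣ d 1`,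
or `q₁ ∤ d 1` and there is `1 < s ≤ r` with `q₁ ∣ d s` and `d s ≤ min δ_i`, where for
each generating degree `d i` not divisible by `q₁`, `δ_i` is the smallest integer of the
form `d i + β·q₂` divisible by `q₁`. -/
theorem lex_ideal_characterization_two_variables
    (K : Type*) [Field K] [CharZero K]
    (q₁ q₂ : ℕ) (h0 : 0 < q₁) (hlt : q₁ < q₂) (hcop : Nat.Coprime q₁ q₂)
    (I : Ideal (MvPolynomial (Fin 2) K))
    (hmon : ∃ A : Set (Fin 2 →₀ ℕ),
      I = Ideal.span ((fun μ => (monomial μ (1 : K) : MvPolynomial (Fin 2) K)) '' A))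
    (r : ℕ) (hr : 0 < r) (d : Fin r → ℕ) (hd : StrictMono d)
    (hdegs : ∀ μ : Fin 2 →₀ ℕ, MinGen I μ → ∃ i, Finsupp.weight ![q₁, q₂] μ = d i)
    (hocc : ∀ i : Fin r, ∃ μ : Fin 2 →₀ ℕ, MinGen I μ ∧ Finsupp.weight ![q₁, q₂] μ = d i)
    (hlexcomp : ∀ i : Fin r,
      IsLexSeg ![q₁, q₂]
        {μ | (monomial μ (1 : K) : MvPolynomial (Fin 2) K) ∈ I ∧
          Finsupp.weight ![q₁, q₂] μ = d i} (d i)) :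
    IsLexIdealMon ![q₁, q₂] I ↔
      (q₁ ∣ d ⟨0, hr⟩ ∨
        (¬ q₁ ∣ d ⟨0, hr⟩ ∧
          ∃ s : Fin r, ⟨0, hr⟩ < s ∧ q₁ ∣ d s ∧
            ∀ i : Fin r, ¬ q₁ ∣ d i →
              d s ≤ sInf {e : ℕ | q₁ ∣ e ∧ ∃ β : ℕ, e = d i + β * q₂})) :=
  lex_ideal_characterization_two_variables_general K q₁ q₂ h0 hlt hcop I r hr d hd hdegs hocc
    hlexcomp
end
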